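/- arXiv:2012.08273 — 3 statements merged into one kernel-verified Lean document; each statement's English description precedes it below -/
import Mathlib

section
/- (Pointwise maximal bound for quasi-interpolation operators.) Let d≥1, a>0, 1/2<λ≤1. Suppose the family φ=(φ_j), φ_j ∈ 𝒯_j^1, satisfies |φ_j(x)| ≤ C₀·2^j/(1+2^j|x|)² for all j ∈ ℤ₊ and x ∈ [-π,π], and the family φ̃=(φ̃_j) satisfies: there exist c,τ>0 such that |(φ̃_𝐣*g)(𝐱)| ≤ c·sup{|g(𝐱+𝐲)| : |y_i| ≤ τ2^{-j_i}, i=1,…,d} for all g ∈ C(𝕋^d) and 𝐣 ∈ ℤ₊^d. Then there exists C such that for all 𝐣,𝐥 ∈ ℤ₊^d, all f ∈ C(𝕋^d) and all 𝐱: |Q_𝐣(f,φ,φ̃)(𝐱)| ≤ C·2^{a|𝐥|₁}·(ℳ((𝒫_{2^{𝐣+𝐥},a}f)^λ)(𝐱))^{1/λ}, with C independent of 𝐥, 𝐣, 𝐱 and f. -/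
open MeasureTheory Complex Filter Set
open scoped BigOperators ENNReal NNReal Topology

noncomputable section

namespace Smolyak

/-! ### Univariate notions on the torus `𝕋 = ℝ/2πℤ`
(functions on `𝕋` are modelled as `2π`-periodic functions on `ℝ`). -/

/-- `A_j = [-2^{j-1}, 2^{j-1}) ∩ ℤ`, encoded via `-2^j ≤ 2k < 2^j`
(so that it also makes sense for `j = 0`, where `A_0 = {0}`). -/
def Aset (j : ℕ) : Finset ℤ :=
  (Finset.Icc (-(2 ^ j : ℤ)) (2 ^ j)).filter fun k => -(2 ^ j : ℤ) ≤ 2 * k ∧ 2 * k < 2 ^ j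

/-- the sample point `x_k^j = π k / 2^{j-1} = 2πk/2^j`. -/
def xpt (j : ℕ) (k : ℤ) : ℝ := 2 * Real.pi * (k : ℝ) / 2 ^ j

/-- the `k`-th Fourier coefficient of a `2π`-periodic function on `ℝ`. -/
def fc1 (f : ℝ → ℂ) (k : ℤ) : ℂ :=
  (2 * Real.pi)⁻¹ • ∫ x in (-Real.pi)..Real.pi, f x * Complex.exp (-Complex.I * (k : ℂ) * (x : ℂ))

/-- convolution on `𝕋`. -/
def conv1 (f g : ℝ → ℂ) (x : ℝ) : ℂ :=
  (2 * Real.pi)⁻¹ • ∫ t in (-Real.pi)..Real.pi, f (x - t) * g t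

/-- membership in `𝒯_j^1 = span{e^{iℓx} : -2^j ≤ ℓ < 2^j}`. -/
def TrigPoly1 (j : ℕ) (f : ℝ → ℂ) : Prop :=
  ∃ c : ℤ → ℂ,
    (∀ ℓ : ℤ, ℓ ∉ Finset.Ico (-(2 ^ j : ℤ)) (2 ^ j) → c ℓ = 0) ∧
      ∀ x : ℝ, f x = ∑ ℓ ∈ Finset.Icc (-(2 ^ j : ℤ)) (2 ^ j),
        c ℓ * Complex.exp (Complex.I * (ℓ : ℂ) * (x : ℂ))

/-- `L_p`-norm over one period of an `ℝ≥0∞`-valued function (`essSup` when `p = ∞`). -/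
def LpE1 (p : ℝ≥0∞) (F : ℝ → ℝ≥0∞) : ℝ≥0∞ :=
  if p = ∞ then essSup F (volume.restrict (Set.Icc (-Real.pi) Real.pi))
  else (∫⁻ x in Set.Icc (-Real.pi) Real.pi, F x ^ p.toReal) ^ (1 / p.toReal)

/-- `L_p(𝕋)`-norm. -/
def Lp1 (p : ℝ≥0∞) (f : ℝ → ℂ) : ℝ≥0∞ := LpE1 p fun x => (‖f x‖₊ : ℝ≥0∞)

/-- `‖λ‖_{M_p(𝕋)} ≤ C`: the Fourier multiplier bound, expressed on trigonometric
polynomials (with finitely supported coefficients `c`). -/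
def MpBound (p : ℝ≥0∞) (lam : ℤ → ℂ) (C : ℝ≥0∞) : Prop :=
  ∀ c : ℤ →₀ ℂ,
    Lp1 p (fun x => ∑ k ∈ c.support, lam k * c k * Complex.exp (Complex.I * (k : ℂ) * (x : ℂ))) ≤
      C * Lp1 p (fun x => ∑ k ∈ c.support, c k * Complex.exp (Complex.I * (k : ℂ) * (x : ℂ)))

/-- `sup_j ‖λ_j‖_{M_p(𝕋)} < ∞`. -/
def MpFinite (p : ℝ≥0∞) (lam : ℕ → ℤ → ℂ) : Prop :=
  ∃ C : ℝ≥0∞, C ≠ ∞ ∧ ∀ j : ℕ, MpBound p (lam j) C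

/-- the quantity `‖g‖_{𝓛_{q,j}(𝕋)}`. -/
def calL (q : ℝ≥0∞) (j : ℕ) (g : ℝ → ℂ) : ℝ≥0∞ :=
  if q = ∞ then
    ⨆ x : ℝ, ENNReal.ofReal ((2 : ℝ) ^ (-(j : ℤ)) * ∑ k ∈ Aset j, ‖g (x - xpt j k)‖)
  else
    ((2 : ℝ≥0∞) ^ (j : ℕ) *
        ∫⁻ x in Set.Icc (-(Real.pi * 2 ^ (-(j : ℤ)))) (Real.pi * 2 ^ (-(j : ℤ))),
          (ENNReal.ofReal ((2 : ℝ) ^ (-(j : ℤ)) * ∑ k ∈ Aset j, ‖g (x - xpt j k)‖)) ^ q.toReal) ^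
      (1 / q.toReal)

/-- a smooth dyadic resolution of unity `(ϕ_j)_{j≥0}` on `ℝ`. -/
structure ResolutionOfUnity (phi : ℕ → ℝ → ℝ) : Prop where
  smooth : ∀ j, ContDiff ℝ (⊤ : ℕ∞) (phi j)
  compact_supp : ∀ j, HasCompactSupport (phi j)
  supp0 : ∀ x : ℝ, 2 < |x| → phi 0 x = 0
  suppj : ∀ j : ℕ, 1 ≤ j → ∀ x : ℝ,
    ¬((2 : ℝ) ^ ((j : ℤ) - 1) ≤ |x| ∧ |x| ≤ (2 : ℝ) ^ ((j : ℤ) + 1)) → phi j x = 0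
  derivBound : ∀ ℓ : ℕ, ∃ c : ℝ, ∀ (j : ℕ) (x : ℝ),
    (2 : ℝ) ^ (j * ℓ) * |iteratedDeriv ℓ (phi j) x| ≤ c
  sum_one : ∀ x : ℝ, ∑' j : ℕ, phi j x = 1

/-- the compatibility condition (of order `s`, for the exponent `p`):
`sup_j ‖((1-φ̂_j(k)φ̃̂_j(k))/(2^{-j}k)^s · ϕ₀(δ2^{-j}k))_k‖_{M_p(𝕋)} < ∞` for some `δ > 0`. -/
def Compat (p : ℝ≥0∞) (s : ℝ) (phi0 : ℝ → ℝ) (φ φt : ℕ → ℝ → ℂ) : Prop :=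
  ∃ δ : ℝ, 0 < δ ∧ ∃ C : ℝ≥0∞, C ≠ ∞ ∧ ∀ j : ℕ,
    MpBound p
      (fun k : ℤ =>
        (1 - fc1 (φ j) k * fc1 (φt j) k) / (((2 : ℂ) ^ (-(j : ℤ)) * (k : ℂ)) ^ (s : ℂ)) *
          ((phi0 (δ * 2 ^ (-(j : ℤ)) * (k : ℝ)) : ℝ) : ℂ)) C

/-! ### Multivariate notions on `𝕋^d` -/

/-- the fundamental cube `[-π,π]^d` of `𝕋^d`. -/
def cubeT (d : ℕ) : Set (Fin d → ℝ) := Set.univ.pi fun _ => Set.Icc (-Real.pi) Real.pi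

/-- `2π`-periodicity in each variable. -/
def PeriodicD {d : ℕ} (f : (Fin d → ℝ) → ℂ) : Prop :=
  ∀ (x : Fin d → ℝ) (i : Fin d), f (Function.update x i (x i + 2 * Real.pi)) = f x

/-- `L_p(𝕋^d)`-norm of an `ℝ≥0∞`-valued function. -/
def LpED (d : ℕ) (p : ℝ≥0∞) (F : (Fin d → ℝ) → ℝ≥0∞) : ℝ≥0∞ :=
  if p = ∞ then essSup F (volume.restrict (cubeT d))
  else (∫⁻ x in cubeT d, F x ^ p.toReal) ^ (1 / p.toReal)

/-- `L_p(𝕋^d)`-norm. -/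
def LpD (d : ℕ) (p : ℝ≥0∞) (f : (Fin d → ℝ) → ℂ) : ℝ≥0∞ :=
  LpED d p fun x => (‖f x‖₊ : ℝ≥0∞)

/-- the character `e^{i(𝐤,𝐱)}`. -/
def eD {d : ℕ} (k : Fin d → ℤ) (x : Fin d → ℝ) : ℂ :=
  Complex.exp (Complex.I * ∑ i, (k i : ℂ) * (x i : ℂ))

/-- the `𝐤`-th Fourier coefficient on `𝕋^d`. -/
def fcD (d : ℕ) (f : (Fin d → ℝ) → ℂ) (k : Fin d → ℤ) : ℂ :=
  ((2 * Real.pi) ^ (-(d : ℤ)) : ℝ) •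
    ∫ x in cubeT d, f x * Complex.exp (-Complex.I * ∑ i, (k i : ℂ) * (x i : ℂ))

/-- convolution on `𝕋^d`. -/
def convD (d : ℕ) (f g : (Fin d → ℝ) → ℂ) (x : Fin d → ℝ) : ℂ :=
  ((2 * Real.pi) ^ (-(d : ℤ)) : ℝ) • ∫ t in cubeT d, f (x - t) * g t

/-- `|𝐣|₁ = j₁ + ⋯ + j_d`. -/
def l1 {d : ℕ} (j : Fin d → ℕ) : ℕ := ∑ i, j i

/-- the dyadic block `δ_𝐣(f)` associated with a resolution of unity. -/
def deltaOp {d : ℕ} (phi : ℕ → ℝ → ℝ) (j : Fin d → ℕ) (f : (Fin d → ℝ) → ℂ)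
    (x : Fin d → ℝ) : ℂ :=
  ∑' k : Fin d → ℤ, (∏ i, ((phi (j i) ((k i : ℝ)) : ℝ) : ℂ)) * fcD d f k * eD k x

/-- the `ℓ_θ`-norm of an `ℝ≥0∞`-valued family indexed by `ℤ₊^d`. -/
def lthetaE {d : ℕ} (θ : ℝ≥0∞) (a : (Fin d → ℕ) → ℝ≥0∞) : ℝ≥0∞ :=
  if θ = ∞ then ⨆ j, a j else (∑' j, a j ^ θ.toReal) ^ (1 / θ.toReal)

/-- the norm of the Besov space `𝐁^r_{p,θ}(𝕋^d)` of dominating mixed smoothness. -/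
def BesovNorm {d : ℕ} (phi : ℕ → ℝ → ℝ) (r : ℝ) (p θ : ℝ≥0∞)
    (f : (Fin d → ℝ) → ℂ) : ℝ≥0∞ :=
  lthetaE θ fun j =>
    ENNReal.ofReal ((2 : ℝ) ^ (r * (l1 j : ℝ))) * LpD d p (deltaOp phi j f)

/-- membership in `𝐁^r_{p,θ}(𝕋^d)`. -/
def MemBesov {d : ℕ} (phi : ℕ → ℝ → ℝ) (r : ℝ) (p θ : ℝ≥0∞)
    (f : (Fin d → ℝ) → ℂ) : Prop :=
  IntegrableOn f (cubeT d) ∧ BesovNorm phi r p θ f ≠ ∞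

/-- the norm of the Triebel–Lizorkin space `𝐅^r_{p,θ}(𝕋^d)` of dominating mixed smoothness. -/
def TLNorm {d : ℕ} (phi : ℕ → ℝ → ℝ) (r : ℝ) (p θ : ℝ≥0∞)
    (f : (Fin d → ℝ) → ℂ) : ℝ≥0∞ :=
  LpED d p fun x => lthetaE θ fun j =>
    ENNReal.ofReal ((2 : ℝ) ^ (r * (l1 j : ℝ))) * (‖deltaOp phi j f x‖₊ : ℝ≥0∞)

/-- membership in `𝐅^r_{p,θ}(𝕋^d)`. -/
def MemTL {d : ℕ} (phi : ℕ → ℝ → ℝ) (r : ℝ) (p θ : ℝ≥0∞)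
    (f : (Fin d → ℝ) → ℂ) : Prop :=
  IntegrableOn f (cubeT d) ∧ TLNorm phi r p θ f ≠ ∞

/-! ### Quasi-interpolation operators and the Smolyak algorithm -/

/-- the univariate quasi-interpolation operator
`Q_j(f,φ,φ̃)(x) = 2^{-j} ∑_{k∈A_j} (f*φ̃_j)(x_k^j) φ_j(x-x_k^j)`. -/
def Q1 (φ φt : ℕ → ℝ → ℂ) (j : ℕ) (f : ℝ → ℂ) (x : ℝ) : ℂ :=
  (2 : ℂ) ^ (-(j : ℤ)) * ∑ k ∈ Aset j, conv1 f (φt j) (xpt j k) * φ j (x - xpt j k)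

/-- the operator `Q_j^i` acting in the `i`-th variable of a `d`-variate function. -/
def QiOp {d : ℕ} (φ φt : ℕ → ℝ → ℂ) (i : Fin d) (j : ℕ) (f : (Fin d → ℝ) → ℂ)
    (x : Fin d → ℝ) : ℂ :=
  (2 : ℂ) ^ (-(j : ℤ)) * ∑ k ∈ Aset j,
    conv1 (fun t => f (Function.update x i t)) (φt j) (xpt j k) * φ j (x i - xpt j k)

/-- `(Q_j^i - Q_{j-1}^i) f`, with `Q_{-1} = 0`. -/
def DeltaI {d : ℕ} (φ φt : ℕ → ℝ → ℂ) (i : Fin d) (j : ℕ) (f : (Fin d → ℝ) → ℂ) :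
    (Fin d → ℝ) → ℂ :=
  fun x => QiOp φ φt i j f x - if j = 0 then 0 else QiOp φ φt i (j - 1) f x

/-- the mixed difference `Δ_𝐣^Q = ∏_{i=1}^d (Q_{j_i}^i - Q_{j_i-1}^i)`. -/
def DeltaQ {d : ℕ} (φ φt : ℕ → ℝ → ℂ) (j : Fin d → ℕ) (f : (Fin d → ℝ) → ℂ) :
    (Fin d → ℝ) → ℂ :=
  (List.finRange d).foldr (fun i g => DeltaI φ φt i (j i) g) f

/-- the index set `{𝐣 ∈ ℤ₊^d : |𝐣|₁ ≤ n}`. -/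
def hypFinset (d n : ℕ) : Finset (Fin d → ℕ) :=
  (Fintype.piFinset fun _ : Fin d => Finset.range (n + 1)).filter fun j => l1 j ≤ n

/-- the Smolyak algorithm `T_n^Q = ∑_{|𝐣|₁ ≤ n} Δ_𝐣^Q`. -/
def TnQ {d : ℕ} (φ φt : ℕ → ℝ → ℂ) (n : ℕ) (f : (Fin d → ℝ) → ℂ)
    (x : Fin d → ℝ) : ℂ :=
  ∑ j ∈ hypFinset d n, DeltaQ φ φt j f x

/-- `f = ∑_{𝐣∈ℤ₊^d} Δ_𝐣^Q(f)` with unconditional convergence in `L_p(𝕋^d)`: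
the partial sums over finite subsets of `ℤ₊^d` converge to `f` in `L_p(𝕋^d)` along
the net of finite subsets. -/
def UncondRep (d : ℕ) (p : ℝ≥0∞) (φ φt : ℕ → ℝ → ℂ) (f : (Fin d → ℝ) → ℂ) : Prop :=
  Filter.Tendsto
    (fun S : Finset (Fin d → ℕ) => LpD d p fun x => f x - ∑ j ∈ S, DeltaQ φ φt j f x)
    Filter.atTop (nhds 0)

/-- conditions 1)–3) on the families `φ`, `φ̃` (B-space setting):
`φ_j ∈ 𝒯_j^1`, `sup_j ‖(φ̂_j(k))_k‖_{M_p} < ∞`, `φ̃_j ∈ L₁(𝕋)`,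
`sup_j ‖φ̃_j‖_{𝓛_{p',j}} < ∞`, and the compatibility condition of order `s`. -/
def BCond (p p' : ℝ≥0∞) (s : ℝ) (phi0 : ℝ → ℝ) (φ φt : ℕ → ℝ → ℂ) : Prop :=
  (∀ j, TrigPoly1 j (φ j)) ∧
  MpFinite p (fun j => fc1 (φ j)) ∧
  (∀ j, Function.Periodic (φt j) (2 * Real.pi)) ∧
  (∀ j, IntegrableOn (φt j) (Set.Icc (-Real.pi) Real.pi)) ∧
  (∃ C : ℝ≥0∞, C ≠ ∞ ∧ ∀ j, calL p' j (φt j) ≤ C) ∧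
  Compat p s phi0 φ φt

/-! ### Multivariate multipliers and conditions for the F-scale -/

/-- `k` lies in the frequency box of `𝒯_𝐣^d`. -/
def inBox {d : ℕ} (j : Fin d → ℕ) (k : Fin d → ℤ) : Prop :=
  ∀ i, -(2 ^ (j i) : ℤ) ≤ k i ∧ k i < 2 ^ (j i)

/-- `μ = (μ_𝐣)` is a Fourier multiplier in `L_p(𝕋^d, ℓ_θ)` (tested on sequences of
trigonometric polynomials `t_𝐣 ∈ 𝒯_𝐣^d`). -/
def MpLtheta {d : ℕ} (p θ : ℝ≥0∞) (μ : (Fin d → ℕ) → (Fin d → ℤ) → ℂ) : Prop :=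
  ∃ C : ℝ≥0∞, C ≠ ∞ ∧
    ∀ c : (Fin d → ℕ) → ((Fin d → ℤ) →₀ ℂ),
      (∀ j : Fin d → ℕ, ∀ k ∈ (c j).support, inBox j k) →
      LpED d p (fun x => lthetaE θ fun j =>
          (‖∑ k ∈ (c j).support, μ j k * c j k * eD k x‖₊ : ℝ≥0∞)) ≤
        C * LpED d p (fun x => lthetaE θ fun j =>
          (‖∑ k ∈ (c j).support, c j k * eD k x‖₊ : ℝ≥0∞))

/-- the product kernel `φ̃_𝐣(𝐱) = ∏_i φ̃_{j_i}(x_i)`. -/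
def prodKer {d : ℕ} (φt : ℕ → ℝ → ℂ) (j : Fin d → ℕ) (t : Fin d → ℝ) : ℂ :=
  ∏ i, φt (j i) (t i)

/-- condition: `|(φ̃_𝐣 * g)(𝐱)| ≤ c · sup{|g(𝐱+𝐲)| : |y_i| ≤ τ 2^{-j_i}}` for continuous
periodic `g`. -/
def LocalDom (d : ℕ) (τ cc : ℝ) (φt : ℕ → ℝ → ℂ) : Prop :=
  ∀ (j : Fin d → ℕ) (g : (Fin d → ℝ) → ℂ), Continuous g → PeriodicD g →
    ∀ x : Fin d → ℝ,
      ‖convD d (prodKer φt j) g x‖ ≤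
        cc * ⨆ y : {y : Fin d → ℝ // ∀ i, |y i| ≤ τ * 2 ^ (-(j i : ℤ))}, ‖g (x + y.1)‖

/-- Fourier coefficients with the convention that for a negative index the family is `0`. -/
def fcN (φ : ℕ → ℝ → ℂ) (m : ℤ) (k : ℤ) : ℂ := if 0 ≤ m then fc1 (φ m.toNat) k else 0

/-- the multiplier `μ^{(s)}_𝐦(𝐤) = ∏_i (1-φ̂_{m_i}(k_i)φ̃̂_{m_i}(k_i))/(2^{-m_i}k_i)^s`. -/
def muS {d : ℕ} (s : ℝ) (φ φt : ℕ → ℝ → ℂ) (m : Fin d → ℤ) (k : Fin d → ℤ) : ℂ :=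
  ∏ i, (1 - fcN φ (m i) (k i) * fcN φt (m i) (k i)) /
    (((2 : ℂ) ^ (-(m i)) * ((k i : ℤ) : ℂ)) ^ (s : ℂ))

/-- conditions 1')–3') on the families `φ`, `φ̃` (F-space setting). -/
def FCond (d : ℕ) (p p' θ : ℝ≥0∞) (s : ℝ) (phi0 : ℝ → ℝ) (φ φt : ℕ → ℝ → ℂ) : Prop :=
  BCond p p' s phi0 φ φt ∧
  MpLtheta (d := d) p θ (fun j k => ∏ i, fc1 (φ (j i)) (k i)) ∧
  (∃ τ cc : ℝ, 0 < τ ∧ 0 < cc ∧ LocalDom d τ cc φt) ∧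
  (∀ b : Fin d → ℤ, (∀ i, b i = -1 ∨ b i = 0) →
    MpLtheta (d := d) p θ fun j k => muS s φ φt (fun i => (j i : ℤ) + b i) k)

/-- condition (cond) with parameters `ξ` and `λ`: for all `u ≥ ξ+1`,
`φ̃̂_j(2^u) - φ̃̂_{j-1}(2^u) = λ` if `j = u - ξ` and `= 0` if `0 ≤ j < u - ξ`
(with the convention `φ̃_{-1} = 0`). -/
def CondCWith (φt : ℕ → ℝ → ℂ) (ξ : ℕ) (lam : ℂ) : Prop :=
  lam ≠ 0 ∧ ∀ u j : ℕ, ξ + 1 ≤ u →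
    ((j : ℤ) = (u : ℤ) - (ξ : ℤ) →
      fc1 (φt j) (2 ^ u) - (if j = 0 then 0 else fc1 (φt (j - 1)) (2 ^ u)) = lam) ∧
    ((j : ℤ) < (u : ℤ) - (ξ : ℤ) →
      fc1 (φt j) (2 ^ u) - (if j = 0 then 0 else fc1 (φt (j - 1)) (2 ^ u)) = 0)

/-- condition (cond). -/
def CondC (φt : ℕ → ℝ → ℂ) : Prop := ∃ (ξ : ℕ) (lam : ℂ), CondCWith φt ξ lam

/-! ### Rates of convergence -/

/-- the rate of convergence of the Smolyak algorithm for the Besov classes. -/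
def rateB (d : ℕ) (p q θ : ℝ≥0∞) (r : ℝ) (n : ℕ) : ℝ :=
  if q ≤ p then (2 : ℝ) ^ (-(r * n)) * (n : ℝ) ^ (((d : ℝ) - 1) * (1 - (1 / θ).toReal))
  else if q ≠ ∞ then
    (2 : ℝ) ^ (-((r - (1 / p).toReal + (1 / q).toReal) * n)) *
      (n : ℝ) ^ (((d : ℝ) - 1) * max ((1 / q).toReal - (1 / θ).toReal) 0)
  else (2 : ℝ) ^ (-((r - (1 / p).toReal) * n)) *
      (n : ℝ) ^ (((d : ℝ) - 1) * (1 - (1 / θ).toReal))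

/-- the rate of convergence of the Smolyak algorithm for the Triebel–Lizorkin classes. -/
def rateF (d : ℕ) (p q θ : ℝ≥0∞) (r : ℝ) (n : ℕ) : ℝ :=
  if q ≤ p then (2 : ℝ) ^ (-(r * n)) * (n : ℝ) ^ (((d : ℝ) - 1) * (1 - (1 / θ).toReal))
  else if q ≠ ∞ then (2 : ℝ) ^ (-((r - (1 / p).toReal + (1 / q).toReal) * n))
  else (2 : ℝ) ^ (-((r - (1 / p).toReal) * n)) *
      (n : ℝ) ^ (((d : ℝ) - 1) * (1 - (1 / p).toReal))

/-- the lower bound rate for approximation by operators with range in `𝒯(𝒬_n)`. -/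
def rateLow (d : ℕ) (p q θ : ℝ≥0∞) (r : ℝ) (n : ℕ) : ℝ :=
  if q ≠ ∞ then
    (2 : ℝ) ^ (-((r - (1 / p).toReal + (1 / q).toReal) * n)) *
      (n : ℝ) ^ (((d : ℝ) - 1) * max ((1 / q).toReal - (1 / θ).toReal) 0)
  else (2 : ℝ) ^ (-((r - (1 / p).toReal) * n)) *
      (n : ℝ) ^ (((d : ℝ) - 1) * (1 - (1 / θ).toReal))

/-! ### Hyperbolic crosses, maximal functions, special test functions -/

/-- the step hyperbolic cross `𝒬_n`. -/
def Qcross (d n : ℕ) : Set (Fin d → ℤ) :=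
  {k | ∃ j : Fin d → ℕ, l1 j ≤ n ∧ ∀ i, (2 ^ (j i) / 2 : ℤ) ≤ |k i| ∧ |k i| < 2 ^ (j i)}

/-- membership in `𝒯(𝒬_n)`: trigonometric polynomials with frequencies in `𝒬_n`. -/
def TrigQ (d n : ℕ) (f : (Fin d → ℝ) → ℂ) : Prop :=
  ∃ c : (Fin d → ℤ) →₀ ℂ, (∀ k ∈ c.support, k ∈ Qcross d n) ∧
    ∀ x, f x = ∑ k ∈ c.support, c k * eD k x

/-- the mixed Peetre maximal function `𝒫_{𝐛,a} f`. -/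
def peetre {d : ℕ} (b : Fin d → ℝ) (a : ℝ) (f : (Fin d → ℝ) → ℂ) (x : Fin d → ℝ) : ℝ :=
  ⨆ y : Fin d → ℝ, ‖f (x + y)‖ / ∏ i, (1 + b i * |y i|) ^ a

/-- the Hardy–Littlewood maximal function over axis-parallel cuboids centered at `x`. -/
def maxHL (d : ℕ) (F : (Fin d → ℝ) → ℝ) (x : Fin d → ℝ) : ℝ≥0∞ :=
  ⨆ ρ : {ρ : Fin d → ℝ // ∀ i, 0 < ρ i},
    (∫⁻ t in Set.univ.pi fun i => Set.Icc (x i - ρ.1 i) (x i + ρ.1 i),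
        ENNReal.ofReal (F t)) / ENNReal.ofReal (∏ i, (2 * ρ.1 i))

/-- the sample point `𝐱_𝐤^𝐣`. -/
def xptD {d : ℕ} (j : Fin d → ℕ) (k : Fin d → ℤ) : Fin d → ℝ := fun i => xpt (j i) (k i)

/-- the multivariate quasi-interpolation operator
`Q_𝐣(f)(𝐱) = 2^{-|𝐣|₁} ∑_{𝐤} (f*φ̃_𝐣)(𝐱_𝐤^𝐣) φ_𝐣(𝐱-𝐱_𝐤^𝐣)`. -/
def QD {d : ℕ} (φ φt : ℕ → ℝ → ℂ) (j : Fin d → ℕ) (f : (Fin d → ℝ) → ℂ)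
    (x : Fin d → ℝ) : ℂ :=
  (2 : ℂ) ^ (-(l1 j : ℤ)) * ∑ k ∈ Fintype.piFinset (fun i => Aset (j i)),
    convD d f (prodKer φt j) (xptD j k) * ∏ i, φ (j i) (x i - xpt (j i) (k i))

/-- the averaged operator `U_n(f)(𝐱) = (2π)^{-d} ∫_{𝕋^d} L(f(·+𝛕))(𝐱-𝛕) d𝛕`. -/
def UnOp (d : ℕ) (L : ((Fin d → ℝ) → ℂ) → ((Fin d → ℝ) → ℂ)) (f : (Fin d → ℝ) → ℂ)
    (x : Fin d → ℝ) : ℂ :=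
  ((2 * Real.pi) ^ (-(d : ℤ)) : ℝ) • ∫ τ in cubeT d, L (fun z => f (z + τ)) (x - τ)

/-- the index set `{𝐮 ∈ ℕ^d : |𝐮|₁ = n + dξ, u_i ≥ ξ+1}`. -/
def specialIndex (d ξ n : ℕ) : Finset (Fin d → ℕ) :=
  (Fintype.piFinset fun _ : Fin d => Finset.Icc (ξ + 1) (n + d * ξ)).filter
    fun u => ∑ i, u i = n + d * ξ

/-- the test function `f_n(𝐱) = ∑_{|𝐮|₁ = n+dξ, u_i ≥ ξ+1} e^{i(2^{u_1}x_1+⋯+2^{u_d}x_d)}`. -/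
def fN (d ξ n : ℕ) (x : Fin d → ℝ) : ℂ :=
  ∑ u ∈ specialIndex d ξ n, eD (fun i => (2 ^ u i : ℤ)) x

/-! ### The Kantorovich example -/

/-- the representative of `x` in `[-π, π)`. -/
def toPer (x : ℝ) : ℝ := x - 2 * Real.pi * ⌊(x + Real.pi) / (2 * Real.pi)⌋

/-- the `2π`-periodization of the normalized characteristic function
`2^{j+σ} χ_{[-π2^{-j-σ}, π2^{-j-σ}]}`. -/
def charKer (σ j : ℕ) (x : ℝ) : ℂ :=
  if |toPer x| ≤ Real.pi * 2 ^ (-(j : ℤ) - (σ : ℤ)) then ((2 : ℂ) ^ (j + σ)) else 0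

/-- the (modified) Dirichlet kernel `𝒟_j(x) = ∑_{ℓ ∈ A_j} e^{iℓx}`. -/
def dirKer (j : ℕ) (x : ℝ) : ℂ :=
  ∑ ℓ ∈ Aset j, Complex.exp (Complex.I * (ℓ : ℂ) * (x : ℂ))

/-! ### Auxiliary lemmas for the proof of `pointwise_maximal_bound` -/

section AuxPMB

private lemma toPer_mem_Ico (x : ℝ) : toPer x ∈ Set.Ico (-Real.pi) Real.pi := by
  have h2π : (0:ℝ) < 2 * Real.pi := by positivity
  have h1 : ((⌊(x + Real.pi) / (2 * Real.pi)⌋ : ℝ)) * (2 * Real.pi) ≤ x + Real.pi := by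
    rw [← le_div_iff₀ h2π]; exact Int.floor_le _
  have h2 : x + Real.pi < ((⌊(x + Real.pi) / (2 * Real.pi)⌋ : ℝ) + 1) * (2 * Real.pi) := by
    rw [← div_lt_iff₀ h2π]; exact Int.lt_floor_add_one _
  unfold toPer
  constructor
  · nlinarith
  · nlinarith

private lemma abs_toPer_le (x : ℝ) : |toPer x| ≤ Real.pi := by
  have h := toPer_mem_Ico x
  rw [abs_le]; exact ⟨h.1, h.2.le⟩

private lemma periodic_toPer_eq {f : ℝ → ℂ} (hf : Function.Periodic f (2 * Real.pi)) (x : ℝ) :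
    f (toPer x) = f x := by
  have h : toPer x = x - ⌊(x + Real.pi) / (2 * Real.pi)⌋ • (2 * Real.pi) := by
    unfold toPer; rw [zsmul_eq_mul]; ring
  rw [h, hf.sub_zsmul_eq]

private lemma TrigPoly1.periodic' {j : ℕ} {f : ℝ → ℂ} (h : TrigPoly1 j f) :
    Function.Periodic f (2 * Real.pi) := by
  obtain ⟨c, -, hc⟩ := h
  intro x
  rw [hc, hc]
  refine Finset.sum_congr rfl fun ℓ _ => ?_
  congr 1
  have h1 : (Complex.I * (ℓ : ℂ) * ((x + 2 * Real.pi : ℝ) : ℂ)) =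
      Complex.I * (ℓ : ℂ) * (x : ℂ) + (ℓ : ℂ) * (2 * (Real.pi : ℂ) * Complex.I) := by
    push_cast; ring
  rw [h1, Complex.exp_add, Complex.exp_int_mul_two_pi_mul_I, mul_one]

private lemma PeriodicD.update_int {d : ℕ} {f : (Fin d → ℝ) → ℂ} (hf : PeriodicD f)
    (i : Fin d) (n : ℤ) (w : Fin d → ℝ) :
    f (Function.update w i (w i + 2 * Real.pi * n)) = f w := by
  induction n using Int.induction_on with
  | zero => simp
  | succ n ih =>
    have key := hf (Function.update w i (w i + 2 * Real.pi * (n : ℕ))) i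
    rw [Function.update_self, Function.update_idem] at key
    push_cast at key ih ⊢
    have harg : w i + 2 * Real.pi * ((n : ℝ) + 1) = w i + 2 * Real.pi * (n : ℝ) + 2 * Real.pi := by
      ring
    rw [harg, key, ih]
  | pred n ih =>
    have key := hf (Function.update w i (w i + 2 * Real.pi * (-(n : ℝ) - 1))) i
    rw [Function.update_self, Function.update_idem] at key
    push_cast at key ih ⊢
    have harg : w i + 2 * Real.pi * (-(n : ℝ) - 1) + 2 * Real.pi = w i + 2 * Real.pi * (-(n : ℝ)) := by
      ring
    have harg2 : w i + 2 * Real.pi * (-(n:ℝ) - 1) = w i + 2 * Real.pi * -((n:ℝ) + 1) := by ring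
    rw [harg] at key
    rw [ih] at key
    rw [← harg2] at *
    rw [harg2] at key ⊢
    exact key.symm

private lemma PeriodicD.add_int {d : ℕ} {f : (Fin d → ℝ) → ℂ} (hf : PeriodicD f)
    (z : Fin d → ℝ) (n : Fin d → ℤ) :
    f (fun i => z i + 2 * Real.pi * n i) = f z := by
  classical
  have key : ∀ s : Finset (Fin d),
      f (fun i => if i ∈ s then z i + 2 * Real.pi * n i else z i) = f z := by
    intro s
    induction s using Finset.induction_on with
    | empty => simp
    | @insert i₀ s hi₀ ih =>
      have hw : (fun i => if i ∈ insert i₀ s then z i + 2 * Real.pi * n i else z i) =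
          Function.update (fun i => if i ∈ s then z i + 2 * Real.pi * n i else z i) i₀
            ((fun i => if i ∈ s then z i + 2 * Real.pi * n i else z i) i₀ + 2 * Real.pi * n i₀) := by
        funext i
        by_cases h : i = i₀
        · subst h; simp [hi₀]
        · simp [Function.update_of_ne h, h]
      rw [hw, PeriodicD.update_int hf, ih]
  have := key Finset.univ
  simpa using this

private lemma periodicD_toPer {d : ℕ} {f : (Fin d → ℝ) → ℂ} (hf : PeriodicD f)
    (z : Fin d → ℝ) : f z = f (fun i => toPer (z i)) := by
  have h := PeriodicD.add_int hf (fun i => toPer (z i))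
      (fun i => ⌊(z i + Real.pi) / (2 * Real.pi)⌋)
  rw [← h]
  congr 1
  funext i
  unfold toPer
  ring

private lemma exists_uniform_bound {d : ℕ} {f : (Fin d → ℝ) → ℂ}
    (hfc : Continuous f) (hfp : PeriodicD f) :
    ∃ Mf : ℝ, 0 ≤ Mf ∧ ∀ z, ‖f z‖ ≤ Mf := by
  have hcomp : IsCompact (cubeT d) := isCompact_univ_pi fun _ => isCompact_Icc
  have hne : (cubeT d).Nonempty := by
    refine ⟨0, ?_⟩
    intro i _
    constructor <;> simp [Real.pi_nonneg, neg_nonpos]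
  obtain ⟨z₀, -, hz₀⟩ := hcomp.exists_isMaxOn hne (hfc.norm.continuousOn)
  refine ⟨‖f z₀‖, norm_nonneg _, fun z => ?_⟩
  rw [periodicD_toPer hfp z]
  apply hz₀
  intro i _
  have := toPer_mem_Ico (z i)
  exact ⟨this.1, this.2.le⟩

private lemma one_le_prod_rpow {d : ℕ} {a : ℝ} (ha : 0 ≤ a) (g : Fin d → ℝ)
    (hg : ∀ i, 0 ≤ g i) : (1:ℝ) ≤ ∏ i, (1 + g i) ^ a := by
  calc (1:ℝ) = ∏ _i : Fin d, 1 := by simp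
  _ ≤ ∏ i, (1 + g i) ^ a := by
      refine Finset.prod_le_prod (by intros; norm_num) ?_
      intro i _
      calc (1:ℝ) = 1 ^ a := (Real.one_rpow a).symm
      _ ≤ (1 + g i) ^ a := Real.rpow_le_rpow zero_le_one (by linarith [hg i]) ha

private lemma prod_rpow_pos {d : ℕ} {a : ℝ} (ha : 0 ≤ a) (g : Fin d → ℝ)
    (hg : ∀ i, 0 ≤ g i) : (0:ℝ) < ∏ i, (1 + g i) ^ a := by
  linarith [one_le_prod_rpow ha g hg]

private lemma norm_le_peetre_mul {d : ℕ} {a : ℝ} (ha : 0 ≤ a) {f : (Fin d → ℝ) → ℂ}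
    (hfc : Continuous f) (hfp : PeriodicD f) (b : Fin d → ℝ) (hb : ∀ i, 0 ≤ b i)
    (t w : Fin d → ℝ) :
    ‖f (t + w)‖ ≤ peetre b a f t * ∏ i, (1 + b i * |w i|) ^ a := by
  obtain ⟨Mf, hMf0, hMf⟩ := exists_uniform_bound hfc hfp
  have hbdd : BddAbove (Set.range fun y : Fin d → ℝ =>
      ‖f (t + y)‖ / ∏ i, (1 + b i * |y i|) ^ a) := by
    refine ⟨Mf, ?_⟩
    rintro - ⟨y, rfl⟩
    have h1 : (1:ℝ) ≤ ∏ i, (1 + b i * |y i|) ^ a :=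
      one_le_prod_rpow ha _ fun i => mul_nonneg (hb i) (abs_nonneg _)
    calc ‖f (t + y)‖ / ∏ i, (1 + b i * |y i|) ^ a ≤ ‖f (t + y)‖ :=
          div_le_self (norm_nonneg _) h1
    _ ≤ Mf := hMf _
  have hle := le_ciSup hbdd w
  have hpos : (0:ℝ) < ∏ i, (1 + b i * |w i|) ^ a :=
    prod_rpow_pos ha _ fun i => mul_nonneg (hb i) (abs_nonneg _)
  rw [div_le_iff₀ hpos] at hle
  simpa [peetre] using hle

private lemma measurableSet_cubeT (d : ℕ) : MeasurableSet (cubeT d) :=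
  MeasurableSet.univ_pi fun _ => measurableSet_Icc

private lemma cubeT_neg_mem {d : ℕ} (t : Fin d → ℝ) : -t ∈ cubeT d ↔ t ∈ cubeT d := by
  simp only [cubeT, Set.mem_pi, Set.mem_univ, forall_true_left, Set.mem_Icc, Pi.neg_apply]
  constructor <;> intro h i <;> have := h i <;> constructor <;> linarith [(this).1, (this).2]

private lemma setIntegral_cubeT_neg {d : ℕ} (F : (Fin d → ℝ) → ℂ) :
    ∫ t in cubeT d, F (-t) = ∫ t in cubeT d, F t := by
  rw [← integral_indicator (measurableSet_cubeT d), ← integral_indicator (measurableSet_cubeT d)]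
  have h : (fun t => (cubeT d).indicator (fun s => F (-s)) t) =
      fun t => (cubeT d).indicator F (-t) := by
    funext t
    by_cases ht : t ∈ cubeT d
    · rw [Set.indicator_of_mem ht, Set.indicator_of_mem ((cubeT_neg_mem t).2 ht)]
    · rw [Set.indicator_of_notMem ht, Set.indicator_of_notMem
        (fun hc => ht ((cubeT_neg_mem t).1 hc))]
  rw [h]
  exact integral_neg_eq_self _ _

private lemma convD_swap {d : ℕ} (f K : (Fin d → ℝ) → ℂ) (z : Fin d → ℝ) :
    convD d f K z = convD d K (fun v => f (z + v)) 0 := by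
  unfold convD
  congr 1
  have h := setIntegral_cubeT_neg (fun t => K (0 - t) * f (z + t))
  rw [← h]
  refine MeasureTheory.setIntegral_congr_fun (measurableSet_cubeT d) fun t _ => ?_
  simp only [zero_sub, neg_neg, sub_neg_eq_add, zero_add]
  rw [mul_comm, ← sub_eq_add_neg]

private lemma PeriodicD.comp_add {d : ℕ} {f : (Fin d → ℝ) → ℂ} (hfp : PeriodicD f)
    (z : Fin d → ℝ) : PeriodicD fun v => f (z + v) := by
  intro v i
  have harg : z + Function.update v i (v i + 2 * Real.pi) =
      Function.update (z + v) i ((z + v) i + 2 * Real.pi) := by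
    funext i'
    by_cases h : i' = i
    · subst h; simp [add_assoc]
    · simp [Function.update_of_ne h]
  simp only [harg]
  exact hfp (z + v) i

private lemma conv_sample_bound {d : ℕ} {τ cc : ℝ} {φt : ℕ → ℝ → ℂ}
    (hdom : LocalDom d τ cc φt) {f : (Fin d → ℝ) → ℂ}
    (hfc : Continuous f) (hfp : PeriodicD f) (j : Fin d → ℕ) (z : Fin d → ℝ) :
    ‖convD d f (prodKer φt j) z‖ ≤
      cc * ⨆ y : {y : Fin d → ℝ // ∀ i, |y i| ≤ τ * 2 ^ (-(j i : ℤ))}, ‖f (z + y.1)‖ := by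
  rw [convD_swap]
  have hg : Continuous fun v => f (z + v) := hfc.comp (continuous_const.add continuous_id)
  have := hdom j _ hg (hfp.comp_add z) 0
  simpa using this

/-- periodic distance from `x i` to the `k i`-th grid point. -/
private def Dd {d : ℕ} (j : Fin d → ℕ) (x : Fin d → ℝ) (k : Fin d → ℤ) (i : Fin d) : ℝ :=
  |toPer (x i - xpt (j i) (k i))|

/-- the grid point translated into a window around `x`. -/
private def ctrP {d : ℕ} (j : Fin d → ℕ) (x : Fin d → ℝ) (k : Fin d → ℤ) (i : Fin d) : ℝ :=
  x i - toPer (x i - xpt (j i) (k i))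

/-- local supremum of `‖f‖` near the `k`-th grid point. -/
private def Sv {d : ℕ} (τ : ℝ) (j : Fin d → ℕ) (f : (Fin d → ℝ) → ℂ) (k : Fin d → ℤ) : ℝ :=
  ⨆ y : {y : Fin d → ℝ // ∀ i, |y i| ≤ τ * 2 ^ (-(j i : ℤ))}, ‖f (xptD j k + y.1)‖

/-- the discretized Peetre weight. -/
private def Wt {d : ℕ} (j : Fin d → ℕ) (x : Fin d → ℝ) (k : Fin d → ℤ) : ℝ :=
  ∏ i, (((1:ℝ) + 2 ^ (j i) * Dd j x k i) ^ 2)⁻¹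

/-- small box around the translated grid point. -/
private def Bk {d : ℕ} (j : Fin d → ℕ) (x : Fin d → ℝ) (k : Fin d → ℤ) : Set (Fin d → ℝ) :=
  Set.univ.pi fun i =>
    Set.Icc (ctrP j x k i - (2:ℝ) ^ (-(j i : ℤ))) (ctrP j x k i + (2:ℝ) ^ (-(j i : ℤ)))

private lemma Dd_nonneg {d : ℕ} (j : Fin d → ℕ) (x : Fin d → ℝ) (k : Fin d → ℤ) (i : Fin d) :
    0 ≤ Dd j x k i := abs_nonneg _

private lemma Dd_le_pi {d : ℕ} (j : Fin d → ℕ) (x : Fin d → ℝ) (k : Fin d → ℤ) (i : Fin d) :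
    Dd j x k i ≤ Real.pi := abs_toPer_le _

private lemma Sv_nonneg {d : ℕ} (τ : ℝ) (j : Fin d → ℕ) (f : (Fin d → ℝ) → ℂ)
    (k : Fin d → ℤ) : 0 ≤ Sv τ j f k :=
  Real.iSup_nonneg fun _ => norm_nonneg _

private lemma Wt_nonneg {d : ℕ} (j : Fin d → ℕ) (x : Fin d → ℝ) (k : Fin d → ℤ) :
    0 ≤ Wt j x k :=
  Finset.prod_nonneg fun i _ => inv_nonneg.2 (sq_nonneg _)

private lemma mIdx_ex {d : ℕ} (j : Fin d → ℕ) (x : Fin d → ℝ) (k : Fin d → ℤ) (i : Fin d) :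
    ∃ m : ℕ, Dd j x k i ≤ 2 ^ m * (2:ℝ) ^ (-(j i : ℤ)) := by
  refine ⟨j i + 2, ?_⟩
  have h1 : (2:ℝ) ^ (j i + 2) * (2:ℝ) ^ (-(j i : ℤ)) = 4 := by
    rw [← zpow_natCast (2:ℝ) (j i + 2), ← zpow_add₀ (by norm_num : (2:ℝ) ≠ 0)]
    push_cast
    norm_num
  rw [h1]
  calc Dd j x k i ≤ Real.pi := Dd_le_pi j x k i
  _ ≤ 4 := Real.pi_le_four

/-- the dyadic shell index of the `k`-th grid point, relative to `x`. -/
private noncomputable def mIdx {d : ℕ} (j : Fin d → ℕ) (x : Fin d → ℝ) (k : Fin d → ℤ)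
    (i : Fin d) : ℕ :=
  @Nat.find (fun m => Dd j x k i ≤ 2 ^ m * (2:ℝ) ^ (-(j i : ℤ))) (Classical.decPred _)
    (mIdx_ex j x k i)

private lemma mIdx_spec {d : ℕ} (j : Fin d → ℕ) (x : Fin d → ℝ) (k : Fin d → ℤ) (i : Fin d) :
    Dd j x k i ≤ 2 ^ mIdx j x k i * (2:ℝ) ^ (-(j i : ℤ)) :=
  @Nat.find_spec (fun m => Dd j x k i ≤ 2 ^ m * (2:ℝ) ^ (-(j i : ℤ))) (Classical.decPred _)
    (mIdx_ex j x k i)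

private lemma mIdx_le {d : ℕ} (j : Fin d → ℕ) (x : Fin d → ℝ) (k : Fin d → ℤ) (i : Fin d) :
    mIdx j x k i ≤ j i + 2 := by
  apply @Nat.find_le _ _ (Classical.decPred _)
  have h1 : (2:ℝ) ^ (j i + 2) * (2:ℝ) ^ (-(j i : ℤ)) = 4 := by
    rw [← zpow_natCast (2:ℝ) (j i + 2), ← zpow_add₀ (by norm_num : (2:ℝ) ≠ 0)]
    push_cast
    norm_num
  rw [h1]
  calc Dd j x k i ≤ Real.pi := Dd_le_pi j x k i
  _ ≤ 4 := Real.pi_le_four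

private lemma mIdx_min {d : ℕ} (j : Fin d → ℕ) (x : Fin d → ℝ) (k : Fin d → ℤ) (i : Fin d)
    (h : 1 ≤ mIdx j x k i) :
    2 ^ (mIdx j x k i - 1) * (2:ℝ) ^ (-(j i : ℤ)) < Dd j x k i := by
  have := @Nat.find_min (fun m => Dd j x k i ≤ 2 ^ m * (2:ℝ) ^ (-(j i : ℤ)))
    (Classical.decPred _) (mIdx_ex j x k i) (mIdx j x k i - 1)
    (show mIdx j x k i - 1 < mIdx j x k i by omega)
  exact lt_of_not_ge this

private lemma norm_QD_le {d : ℕ} {τ cc C0' : ℝ} (hcc : 0 < cc) (hC0' : 0 ≤ C0')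
    {φ φt : ℕ → ℝ → ℂ}
    (hφper : ∀ m, Function.Periodic (φ m) (2 * Real.pi))
    (hφ : ∀ (m : ℕ) (y : ℝ), y ∈ Set.Icc (-Real.pi) Real.pi →
      ‖φ m y‖ ≤ C0' * 2 ^ m / (1 + 2 ^ m * |y|) ^ 2)
    (hdom : LocalDom d τ cc φt)
    {f : (Fin d → ℝ) → ℂ} (hfc : Continuous f) (hfp : PeriodicD f)
    (j : Fin d → ℕ) (x : Fin d → ℝ) :
    ‖QD φ φt j f x‖ ≤ cc * C0' ^ d *
      ∑ k ∈ Fintype.piFinset (fun i => Aset (j i)), Sv τ j f k * Wt j x k := by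
  have hφ' : ∀ (m : ℕ) (z : ℝ),
      ‖φ m z‖ ≤ C0' * 2 ^ m * (((1:ℝ) + 2 ^ m * |toPer z|) ^ 2)⁻¹ := by
    intro m z
    rw [← periodic_toPer_eq (hφper m) z]
    have h := hφ m (toPer z) ⟨(toPer_mem_Ico z).1, (toPer_mem_Ico z).2.le⟩
    rwa [div_eq_mul_inv] at h
  have hterm : ∀ k ∈ Fintype.piFinset (fun i => Aset (j i)),
      ‖convD d f (prodKer φt j) (xptD j k) * ∏ i, φ (j i) (x i - xpt (j i) (k i))‖ ≤
        (cc * Sv τ j f k) * (C0' ^ d * 2 ^ (l1 j) * Wt j x k) := by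
    intro k _
    rw [norm_mul]
    have h1 : ‖convD d f (prodKer φt j) (xptD j k)‖ ≤ cc * Sv τ j f k :=
      conv_sample_bound hdom hfc hfp j (xptD j k)
    have h2 : ‖∏ i, φ (j i) (x i - xpt (j i) (k i))‖ ≤ C0' ^ d * 2 ^ (l1 j) * Wt j x k := by
      rw [norm_prod]
      calc ∏ i, ‖φ (j i) (x i - xpt (j i) (k i))‖
          ≤ ∏ i, (C0' * 2 ^ (j i) * (((1:ℝ) + 2 ^ (j i) * Dd j x k i) ^ 2)⁻¹) :=
            Finset.prod_le_prod (fun i _ => norm_nonneg _) fun i _ => hφ' _ _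
      _ = C0' ^ d * 2 ^ (l1 j) * Wt j x k := by
            rw [Finset.prod_mul_distrib, Finset.prod_mul_distrib, Finset.prod_const,
              Finset.prod_pow_eq_pow_sum]
            simp [Wt, l1, Finset.card_univ]
    exact mul_le_mul h1 h2 (norm_nonneg _) (mul_nonneg hcc.le (Sv_nonneg _ _ _ _))
  have hQD : ‖QD φ φt j f x‖ ≤ (2:ℝ) ^ (-(l1 j : ℤ)) *
      ∑ k ∈ Fintype.piFinset (fun i => Aset (j i)),
        ((cc * Sv τ j f k) * (C0' ^ d * 2 ^ (l1 j) * Wt j x k)) := by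
    rw [QD, norm_mul, norm_zpow]
    have h2 : ‖(2:ℂ)‖ = 2 := by norm_num
    rw [h2]
    refine mul_le_mul_of_nonneg_left ?_ (by positivity)
    exact le_trans (norm_sum_le _ _) (Finset.sum_le_sum hterm)
  refine hQD.trans (le_of_eq ?_)
  have hpow : (2:ℝ) ^ (-(l1 j : ℤ)) * (2:ℝ) ^ (l1 j) = 1 := by
    rw [← zpow_natCast (2:ℝ) (l1 j), ← zpow_add₀ (by norm_num : (2:ℝ) ≠ 0)]
    simp
  calc (2:ℝ) ^ (-(l1 j : ℤ)) *
      ∑ k ∈ Fintype.piFinset (fun i => Aset (j i)),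
        ((cc * Sv τ j f k) * (C0' ^ d * 2 ^ (l1 j) * Wt j x k))
      = ((2:ℝ) ^ (-(l1 j : ℤ)) * (2:ℝ) ^ (l1 j)) *
        (cc * C0' ^ d * ∑ k ∈ Fintype.piFinset (fun i => Aset (j i)),
          Sv τ j f k * Wt j x k) := by
        rw [Finset.mul_sum, Finset.mul_sum, Finset.mul_sum]
        refine Finset.sum_congr rfl fun k _ => by ring
  _ = cc * C0' ^ d * ∑ k ∈ Fintype.piFinset (fun i => Aset (j i)),
        Sv τ j f k * Wt j x k := by rw [hpow, one_mul]

private lemma prod_rpow_const {d : ℕ} {x : ℝ} (hx : 0 < x) (c : Fin d → ℝ) :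
    ∏ i, x ^ c i = x ^ (∑ i, c i) := by
  classical
  have key : ∀ s : Finset (Fin d), ∏ i ∈ s, x ^ c i = x ^ (∑ i ∈ s, c i) := by
    intro s
    induction s using Finset.cons_induction with
    | empty => simp
    | cons i s hi ih =>
      rw [Finset.prod_cons, Finset.sum_cons, ih, ← Real.rpow_add hx]
  exact key Finset.univ

private lemma Sv_le_peetre {d : ℕ} {a τ : ℝ} (ha : 0 < a) (hτ : 0 < τ)
    {f : (Fin d → ℝ) → ℂ} (hfc : Continuous f) (hfp : PeriodicD f)
    (j l : Fin d → ℕ) (x : Fin d → ℝ) (k : Fin d → ℤ) (t : Fin d → ℝ)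
    (ht : ∀ i, |t i - ctrP j x k i| ≤ (2:ℝ) ^ (-(j i : ℤ))) :
    Sv τ j f k ≤ ((2 + τ) ^ (a * (d:ℝ)) * (2:ℝ) ^ (a * (l1 l : ℝ))) *
      peetre (fun i => (2:ℝ) ^ (j i + l i)) a f t := by
  have hne : Nonempty {y : Fin d → ℝ // ∀ i, |y i| ≤ τ * 2 ^ (-(j i : ℤ))} :=
    ⟨⟨0, fun i => by simp; positivity⟩⟩
  apply ciSup_le
  rintro ⟨y, hy⟩
  set w : Fin d → ℝ := fun i => ctrP j x k i - t i + y i with hw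
  have hfeq : f (xptD j k + y) = f (t + w) := by
    have h := PeriodicD.add_int hfp (t + w)
        (fun i => -⌊(x i - xpt (j i) (k i) + Real.pi) / (2 * Real.pi)⌋)
    rw [← h]
    congr 1
    funext i
    simp only [Pi.add_apply, hw]
    unfold ctrP toPer xptD
    push_cast
    ring
  have hb : ∀ i, (0:ℝ) ≤ (2:ℝ) ^ (j i + l i) := fun i => by positivity
  have h1 := norm_le_peetre_mul ha.le hfc hfp _ hb t w
  have hP : 0 ≤ peetre (fun i => (2:ℝ) ^ (j i + l i)) a f t :=
    Real.iSup_nonneg fun y => div_nonneg (norm_nonneg _)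
      (le_of_lt (prod_rpow_pos ha.le _ fun i => mul_nonneg (hb i) (abs_nonneg _)))
  simp only []
  rw [hfeq]
  refine h1.trans ?_
  have h2 : ∏ i, ((1:ℝ) + (2:ℝ) ^ (j i + l i) * |w i|) ^ a ≤
      (2 + τ) ^ (a * (d:ℝ)) * (2:ℝ) ^ (a * (l1 l : ℝ)) := by
    calc ∏ i, ((1:ℝ) + (2:ℝ) ^ (j i + l i) * |w i|) ^ a
        ≤ ∏ i, ((2 + τ) * 2 ^ (l i)) ^ a := by
          refine Finset.prod_le_prod (fun i _ => Real.rpow_nonneg (by positivity) a)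
            fun i _ => ?_
          refine Real.rpow_le_rpow (by positivity) ?_ ha.le
          have hwi : |w i| ≤ (1 + τ) * (2:ℝ) ^ (-(j i : ℤ)) := by
            calc |w i| ≤ |ctrP j x k i - t i| + |y i| := abs_add_le _ _
            _ ≤ (2:ℝ) ^ (-(j i : ℤ)) + τ * 2 ^ (-(j i : ℤ)) :=
                add_le_add (by rw [abs_sub_comm]; exact ht i) (hy i)
            _ = (1 + τ) * 2 ^ (-(j i : ℤ)) := by ring
          have e1 : (2:ℝ) ^ (j i + l i) * (2:ℝ) ^ (-(j i : ℤ)) = (2:ℝ) ^ (l i) := by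
            rw [← zpow_natCast (2:ℝ) (j i + l i), ← zpow_natCast (2:ℝ) (l i),
              ← zpow_add₀ (by norm_num : (2:ℝ) ≠ 0)]
            congr 1
            push_cast
            ring
          have hA : (2:ℝ) ^ (j i + l i) * |w i| ≤ (1 + τ) * (2:ℝ) ^ (l i) := by
            calc (2:ℝ) ^ (j i + l i) * |w i| ≤
                (2:ℝ) ^ (j i + l i) * ((1 + τ) * (2:ℝ) ^ (-(j i : ℤ))) :=
                  mul_le_mul_of_nonneg_left hwi (by positivity)
            _ = (1 + τ) * ((2:ℝ) ^ (j i + l i) * (2:ℝ) ^ (-(j i : ℤ))) := by ring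
            _ = (1 + τ) * (2:ℝ) ^ (l i) := by rw [e1]
          have h2l : (1:ℝ) ≤ 2 ^ (l i) := one_le_pow₀ (by norm_num)
          nlinarith [hA, h2l, hτ]
    _ = (2 + τ) ^ (a * (d:ℝ)) * (2:ℝ) ^ (a * (l1 l : ℝ)) := by
        have hper : ∀ i : Fin d, ((2 + τ) * (2:ℝ) ^ (l i)) ^ a =
            (2 + τ) ^ a * (2:ℝ) ^ ((l i : ℝ) * a) := by
          intro i
          rw [Real.mul_rpow (by positivity) (by positivity),
            ← Real.rpow_natCast (2:ℝ) (l i), ← Real.rpow_mul (by norm_num : (0:ℝ) ≤ 2)]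
        rw [Finset.prod_congr rfl fun i _ => hper i, Finset.prod_mul_distrib,
          Finset.prod_const, prod_rpow_const (by norm_num : (0:ℝ) < 2),
          ← Real.rpow_natCast ((2+τ) ^ a) _, ← Real.rpow_mul (by positivity : (0:ℝ) ≤ 2 + τ)]
        congr 1
        · simp [Finset.card_univ]
        · rw [← Finset.sum_mul]
          have : (∑ i, (l i : ℝ)) = (l1 l : ℝ) := by rw [l1]; push_cast; ring
          rw [this]; ring
  calc peetre (fun i => (2:ℝ) ^ (j i + l i)) a f t *
        ∏ i, ((1:ℝ) + (2:ℝ) ^ (j i + l i) * |w i|) ^ a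
      ≤ peetre (fun i => (2:ℝ) ^ (j i + l i)) a f t *
        ((2 + τ) ^ (a * (d:ℝ)) * (2:ℝ) ^ (a * (l1 l : ℝ))) :=
        mul_le_mul_of_nonneg_left h2 hP
  _ = ((2 + τ) ^ (a * (d:ℝ)) * (2:ℝ) ^ (a * (l1 l : ℝ))) *
        peetre (fun i => (2:ℝ) ^ (j i + l i)) a f t := by ring

private lemma volume_Bk {d : ℕ} (j : Fin d → ℕ) (x : Fin d → ℝ) (k : Fin d → ℤ) :
    volume (Bk j x k) = ENNReal.ofReal (∏ i, (2 * (2:ℝ) ^ (-(j i : ℤ)))) := by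
  rw [Bk, volume_pi_pi]
  have h : ∀ i : Fin d, volume (Set.Icc (ctrP j x k i - (2:ℝ) ^ (-(j i : ℤ)))
      (ctrP j x k i + (2:ℝ) ^ (-(j i : ℤ)))) = ENNReal.ofReal (2 * (2:ℝ) ^ (-(j i : ℤ))) := by
    intro i
    rw [Real.volume_Icc]
    congr 1
    ring
  rw [Finset.prod_congr rfl fun i _ => h i]
  rw [← ENNReal.ofReal_prod_of_nonneg fun i _ => by positivity]

private lemma measurableSet_Bk {d : ℕ} (j : Fin d → ℕ) (x : Fin d → ℝ) (k : Fin d → ℤ) :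
    MeasurableSet (Bk j x k) :=
  MeasurableSet.univ_pi fun _ => measurableSet_Icc

private lemma Aset_abs_lt {jj : ℕ} {k : ℤ} (hk : k ∈ Aset jj) : -(2^jj : ℤ) ≤ 2 * k ∧ 2 * k < 2^jj := by
  rw [Aset, Finset.mem_filter] at hk
  exact hk.2

private lemma ctrP_dist {d : ℕ} (j : Fin d → ℕ) (x : Fin d → ℝ) {k k' : Fin d → ℤ}
    (hk : k ∈ Fintype.piFinset fun i => Aset (j i))
    (hk' : k' ∈ Fintype.piFinset fun i => Aset (j i))
    {i : Fin d} (hne : k i ≠ k' i) :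
    2 * Real.pi * (2:ℝ) ^ (-(j i : ℤ)) ≤ |ctrP j x k i - ctrP j x k' i| := by
  have hki := Aset_abs_lt (Fintype.mem_piFinset.1 hk i)
  have hki' := Aset_abs_lt (Fintype.mem_piFinset.1 hk' i)
  set q : ℤ := ⌊(x i - xpt (j i) (k i) + Real.pi) / (2 * Real.pi)⌋ with hq
  set q' : ℤ := ⌊(x i - xpt (j i) (k' i) + Real.pi) / (2 * Real.pi)⌋ with hq'
  set N : ℤ := (k i - k' i) + 2 ^ (j i) * (q - q') with hN
  have hNne : N ≠ 0 := by
    intro h0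
    have hdvd : (2:ℤ) ^ (j i) ∣ (k i - k' i) := ⟨-(q - q'), by linarith [h0]⟩
    have habs : |k i - k' i| < 2 ^ (j i) := by
      rw [abs_lt]; constructor <;> linarith
    have hne0 : k i - k' i ≠ 0 := sub_ne_zero.2 hne
    have := Int.le_of_dvd (abs_pos.2 hne0) ((dvd_abs _ _).2 hdvd)
    omega
  have hNabs : (1:ℝ) ≤ |(N:ℝ)| := by
    rw [← Int.cast_abs]
    exact_mod_cast Int.one_le_abs hNne
  have hdiff : ctrP j x k i - ctrP j x k' i =
      2 * Real.pi * (2:ℝ) ^ (-(j i : ℤ)) * (N:ℝ) := by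
    have h2j : ((2:ℝ) ^ (j i)) ≠ 0 := by positivity
    rw [ctrP, ctrP, toPer, toPer, ← hq, ← hq', hN]
    rw [zpow_neg, zpow_natCast]
    push_cast
    rw [xpt, xpt]
    field_simp
    ring
  rw [hdiff, abs_mul]
  have hpos : (0:ℝ) < 2 * Real.pi * (2:ℝ) ^ (-(j i : ℤ)) := by positivity
  rw [abs_of_pos hpos]
  nlinarith [hNabs, hpos]

private lemma Bk_disjoint {d : ℕ} (j : Fin d → ℕ) (x : Fin d → ℝ) {k k' : Fin d → ℤ}
    (hk : k ∈ Fintype.piFinset fun i => Aset (j i))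
    (hk' : k' ∈ Fintype.piFinset fun i => Aset (j i))
    (hne : k ≠ k') : Disjoint (Bk j x k) (Bk j x k') := by
  rw [Set.disjoint_left]
  intro t htk htk'
  obtain ⟨i, hi⟩ : ∃ i, k i ≠ k' i := by
    by_contra hc
    push_neg at hc
    exact hne (funext hc)
  have h1 := (Set.mem_pi.1 htk) i (Set.mem_univ i)
  have h2 := (Set.mem_pi.1 htk') i (Set.mem_univ i)
  rw [Set.mem_Icc] at h1 h2
  have hd := ctrP_dist j x hk hk' hi
  have htri : |ctrP j x k i - ctrP j x k' i| ≤ 2 * (2:ℝ) ^ (-(j i : ℤ)) := by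
    rw [abs_le]
    constructor <;> linarith [h1.1, h1.2, h2.1, h2.2]
  have hπ : (3:ℝ) < Real.pi := Real.pi_gt_three
  nlinarith [htri, hd, (by positivity : (0:ℝ) < (2:ℝ) ^ (-(j i : ℤ)))]

private lemma Bk_subset {d : ℕ} (j : Fin d → ℕ) (x : Fin d → ℝ) (k : Fin d → ℤ) :
    Bk j x k ⊆ Set.univ.pi fun i =>
      Set.Icc (x i - min ((2 ^ (mIdx j x k i) + 1) * (2:ℝ) ^ (-(j i : ℤ))) (Real.pi + 1))
        (x i + min ((2 ^ (mIdx j x k i) + 1) * (2:ℝ) ^ (-(j i : ℤ))) (Real.pi + 1)) := by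
  intro t ht
  rw [Set.mem_pi]
  intro i _
  have h1 := (Set.mem_pi.1 ht) i (Set.mem_univ i)
  rw [Set.mem_Icc] at h1
  rw [Set.mem_Icc]
  have hxc : |x i - ctrP j x k i| = Dd j x k i := by
    rw [ctrP, Dd]
    congr 1
    ring
  have hD1 : Dd j x k i ≤ 2 ^ (mIdx j x k i) * (2:ℝ) ^ (-(j i : ℤ)) := mIdx_spec j x k i
  have hD2 : Dd j x k i ≤ Real.pi := Dd_le_pi j x k i
  have hz1 : (2:ℝ) ^ (-(j i : ℤ)) ≤ 1 := by
    rw [zpow_neg]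
    rw [inv_le_one_iff₀]
    right
    exact one_le_zpow₀ (by norm_num) (by positivity)
  have habs : |x i - ctrP j x k i| ≤ Dd j x k i := le_of_eq hxc
  have hbound : |t i - x i| ≤
      min ((2 ^ (mIdx j x k i) + 1) * (2:ℝ) ^ (-(j i : ℤ))) (Real.pi + 1) := by
    have h3 : |t i - x i| ≤ (2:ℝ) ^ (-(j i : ℤ)) + Dd j x k i := by
      have := abs_sub_abs_le_abs_sub (t i) (x i)
      have htc : |t i - ctrP j x k i| ≤ (2:ℝ) ^ (-(j i : ℤ)) := by
        rw [abs_le]; constructor <;> linarith [h1.1, h1.2]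
      calc |t i - x i| ≤ |t i - ctrP j x k i| + |ctrP j x k i - x i| := by
            have := abs_sub_le (t i) (ctrP j x k i) (x i)
            linarith
      _ ≤ (2:ℝ) ^ (-(j i : ℤ)) + Dd j x k i := by
            rw [abs_sub_comm (ctrP j x k i) (x i)]
            exact add_le_add htc habs
    refine le_min ?_ ?_
    · calc |t i - x i| ≤ (2:ℝ) ^ (-(j i : ℤ)) + 2 ^ (mIdx j x k i) * (2:ℝ) ^ (-(j i : ℤ)) := by
            linarith
      _ = (2 ^ (mIdx j x k i) + 1) * (2:ℝ) ^ (-(j i : ℤ)) := by ring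
    · calc |t i - x i| ≤ (2:ℝ) ^ (-(j i : ℤ)) + Real.pi := by linarith
      _ ≤ Real.pi + 1 := by linarith
  rw [abs_le] at hbound
  constructor <;> linarith [hbound.1, hbound.2]

private lemma Wt_le_shell {d : ℕ} (j : Fin d → ℕ) (x : Fin d → ℝ) (k : Fin d → ℤ) :
    Wt j x k ≤ ∏ i, (4 * ((4:ℝ)⁻¹) ^ (mIdx j x k i)) := by
  refine Finset.prod_le_prod (fun i _ => inv_nonneg.2 (sq_nonneg _)) fun i _ => ?_
  have hDpos := Dd_nonneg j x k i
  have h2j : (0:ℝ) < (2:ℝ) ^ (j i) := by positivity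
  have hlow : (2:ℝ) ^ (mIdx j x k i) / 2 ≤ 1 + 2 ^ (j i) * Dd j x k i := by
    rcases Nat.eq_zero_or_pos (mIdx j x k i) with h0 | h1
    · rw [h0]
      norm_num
      nlinarith
    · have hmin := mIdx_min j x k i h1
      have he : (2:ℝ) ^ (j i) * (2 ^ (mIdx j x k i - 1) * (2:ℝ) ^ (-(j i : ℤ))) =
          (2:ℝ) ^ (mIdx j x k i - 1) := by
        rw [zpow_neg, zpow_natCast]
        field_simp
      have hk1 : (2:ℝ) ^ (mIdx j x k i - 1) ≤ 2 ^ (j i) * Dd j x k i := by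
        rw [← he]
        exact mul_le_mul_of_nonneg_left hmin.le h2j.le
      have hk2 : (2:ℝ) ^ (mIdx j x k i) / 2 = 2 ^ (mIdx j x k i - 1) := by
        rw [eq_comm, eq_div_iff (by norm_num : (2:ℝ) ≠ 0)]
        rw [← pow_succ]
        congr 1
        omega
      rw [hk2]
      linarith
  have hsq : ((2:ℝ) ^ (mIdx j x k i) / 2) ^ 2 ≤ (1 + 2 ^ (j i) * Dd j x k i) ^ 2 := by
    have h0 : (0:ℝ) ≤ (2:ℝ) ^ (mIdx j x k i) / 2 := by positivity
    nlinarith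
  have hpos2 : (0:ℝ) < ((2:ℝ) ^ (mIdx j x k i) / 2) ^ 2 := by positivity
  have := inv_anti₀ hpos2 hsq
  calc (((1:ℝ) + 2 ^ (j i) * Dd j x k i) ^ 2)⁻¹ ≤ (((2:ℝ) ^ (mIdx j x k i) / 2) ^ 2)⁻¹ := this
  _ = 4 * ((4:ℝ)⁻¹) ^ (mIdx j x k i) := by
      have h4 : ((2:ℝ) ^ (mIdx j x k i)) ^ 2 = 4 ^ (mIdx j x k i) := by
        rw [← pow_mul, show (4:ℝ) = 2 ^ 2 by norm_num, ← pow_mul]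
        ring_nf
      rw [div_pow, h4, inv_div, inv_pow, div_eq_mul_inv]
      norm_num

private lemma sum_rpow_le {ι : Type*} (s : Finset ι) (g : ι → ℝ≥0∞) {p : ℝ}
    (h0 : 0 < p) (h1 : p ≤ 1) : (∑ i ∈ s, g i) ^ p ≤ ∑ i ∈ s, g i ^ p := by
  classical
  induction s using Finset.cons_induction with
  | empty => simp [ENNReal.zero_rpow_of_pos h0]
  | cons i s hi ih =>
    rw [Finset.sum_cons, Finset.sum_cons]
    calc (g i + ∑ i' ∈ s, g i') ^ p ≤ g i ^ p + (∑ i' ∈ s, g i') ^ p :=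
      ENNReal.rpow_add_le_add_rpow _ _ h0.le h1
    _ ≤ g i ^ p + ∑ i' ∈ s, g i' ^ p := add_le_add le_rfl ih

private lemma geom_le {r : ℝ} (h0 : 0 ≤ r) (h1 : r < 1) (N : ℕ) :
    ∑ m ∈ Finset.range N, r ^ m ≤ (1 - r)⁻¹ := by
  have h2 : (0:ℝ) < 1 - r := by linarith
  have h3 : (∑ m ∈ Finset.range N, r ^ m) * (1 - r) ≤ 1 := by
    have := geom_sum_mul r N
    have h4 : (0:ℝ) ≤ r ^ N := pow_nonneg h0 N
    nlinarith
  calc ∑ m ∈ Finset.range N, r ^ m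
      = (∑ m ∈ Finset.range N, r ^ m) * (1 - r) * (1 - r)⁻¹ := by
        field_simp
  _ ≤ 1 * (1 - r)⁻¹ := by
        apply mul_le_mul_of_nonneg_right h3
        positivity
  _ = (1 - r)⁻¹ := one_mul _

private lemma key_bound {d : ℕ} {a lam τ cc C0' : ℝ} (ha : 0 < a) (hlam1 : 1/2 < lam)
    (hlam2 : lam ≤ 1) (hτ : 0 < τ) (hcc : 0 < cc) (hC0' : 0 ≤ C0')
    {φ φt : ℕ → ℝ → ℂ}
    (hφper : ∀ m, Function.Periodic (φ m) (2 * Real.pi))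
    (hφ : ∀ (m : ℕ) (y : ℝ), y ∈ Set.Icc (-Real.pi) Real.pi →
      ‖φ m y‖ ≤ C0' * 2 ^ m / (1 + 2 ^ m * |y|) ^ 2)
    (hdom : LocalDom d τ cc φt)
    (j l : Fin d → ℕ) {f : (Fin d → ℝ) → ℂ} (hfc : Continuous f) (hfp : PeriodicD f)
    (x : Fin d → ℝ) :
    (‖QD φ φt j f x‖₊ : ℝ≥0∞) ^ lam ≤
      ENNReal.ofReal ((cc * C0' ^ d) ^ lam * ((2 + τ) ^ (a * (d:ℝ))) ^ lam *
          (8 * (1 - 2 / (4:ℝ) ^ lam)⁻¹) ^ d) *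
        ENNReal.ofReal ((2:ℝ) ^ (a * lam * (l1 l : ℝ))) *
        maxHL d (fun t => peetre (fun i => (2:ℝ) ^ (j i + l i)) a f t ^ lam) x := by
  classical
  have hlam0 : (0:ℝ) < lam := by linarith
  set P : (Fin d → ℝ) → ℝ := peetre (fun i => (2:ℝ) ^ (j i + l i)) a f with hPdef
  set M : ℝ≥0∞ := maxHL d (fun t => P t ^ lam) x with hMdef
  have hM : ∀ ρ : Fin d → ℝ, (∀ i, 0 < ρ i) →
      (∫⁻ t in Set.univ.pi fun i => Set.Icc (x i - ρ i) (x i + ρ i),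
        ENNReal.ofReal (P t ^ lam)) ≤ M * ENNReal.ofReal (∏ i, (2 * ρ i)) := by
    intro ρ hρ
    have h1 : (∫⁻ t in Set.univ.pi fun i => Set.Icc (x i - ρ i) (x i + ρ i),
        ENNReal.ofReal (P t ^ lam)) / ENNReal.ofReal (∏ i, (2 * ρ i)) ≤ M := by
      rw [hMdef]
      unfold maxHL
      exact le_iSup (fun ρ' : {ρ' : Fin d → ℝ // ∀ i, 0 < ρ' i} =>
        (∫⁻ t in Set.univ.pi fun i => Set.Icc (x i - ρ'.1 i) (x i + ρ'.1 i),
          ENNReal.ofReal (P t ^ lam)) / ENNReal.ofReal (∏ i, (2 * ρ'.1 i)))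
        (⟨ρ, hρ⟩ : {ρ' : Fin d → ℝ // ∀ i, 0 < ρ' i})
    have hv0 : ENNReal.ofReal (∏ i, (2 * ρ i)) ≠ 0 := by
      rw [ne_eq, ENNReal.ofReal_eq_zero, not_le]
      have : (0:ℝ) < ∏ i, (2 * ρ i) := Finset.prod_pos fun i _ => by linarith [hρ i]
      exact this
    exact (ENNReal.div_le_iff hv0 ENNReal.ofReal_ne_top).1 h1
  set grid := Fintype.piFinset (fun i => Aset (j i)) with hgrid
  set c4 : ℝ := (2 + τ) ^ (a * (d:ℝ)) * (2:ℝ) ^ (a * (l1 l : ℝ)) with hc4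
  have hc4pos : (0:ℝ) < c4 := by rw [hc4]; positivity
  have hSnn : ∀ k, 0 ≤ Sv τ j f k := fun k => Sv_nonneg τ j f k
  have hWnn : ∀ k, 0 ≤ Wt j x k := fun k => Wt_nonneg j x k
  -- Step 1: the scalar bound
  have h1 : ‖QD φ φt j f x‖ ≤ cc * C0' ^ d * ∑ k ∈ grid, Sv τ j f k * Wt j x k :=
    norm_QD_le hcc hC0' hφper hφ hdom hfc hfp j x
  -- Step 2: move to ℝ≥0∞ and raise to the power lam
  have h2 : (‖QD φ φt j f x‖₊ : ℝ≥0∞) ^ lam ≤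
      ENNReal.ofReal ((cc * C0' ^ d) ^ lam) *
        ∑ k ∈ grid, ENNReal.ofReal ((Sv τ j f k * Wt j x k) ^ lam) := by
    rw [← enorm_eq_nnnorm, ← ofReal_norm]
    calc (ENNReal.ofReal ‖QD φ φt j f x‖) ^ lam
        ≤ (ENNReal.ofReal (cc * C0' ^ d * ∑ k ∈ grid, Sv τ j f k * Wt j x k)) ^ lam :=
          ENNReal.rpow_le_rpow (ENNReal.ofReal_le_ofReal h1) hlam0.le
    _ = (ENNReal.ofReal (cc * C0' ^ d) *
          ENNReal.ofReal (∑ k ∈ grid, Sv τ j f k * Wt j x k)) ^ lam := by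
          rw [← ENNReal.ofReal_mul (by positivity)]
    _ = ENNReal.ofReal (cc * C0' ^ d) ^ lam *
          (ENNReal.ofReal (∑ k ∈ grid, Sv τ j f k * Wt j x k)) ^ lam :=
          ENNReal.mul_rpow_of_nonneg _ _ hlam0.le
    _ ≤ ENNReal.ofReal ((cc * C0' ^ d) ^ lam) *
          ∑ k ∈ grid, ENNReal.ofReal ((Sv τ j f k * Wt j x k) ^ lam) := by
          rw [ENNReal.ofReal_rpow_of_nonneg (by positivity) hlam0.le]
          refine mul_le_mul_right ?_ _
          rw [ENNReal.ofReal_sum_of_nonneg fun k _ => mul_nonneg (hSnn k) (hWnn k)]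
          refine le_trans (sum_rpow_le _ _ hlam0 hlam2) ?_
          refine Finset.sum_le_sum fun k _ => ?_
          rw [ENNReal.ofReal_rpow_of_nonneg (mul_nonneg (hSnn k) (hWnn k)) hlam0.le]
  -- Step 3: regroup the sum according to the shell index
  set Mset := Fintype.piFinset (fun _i : Fin d => Finset.range ((∑ i, j i) + 3)) with hMset
  have hmaps : ∀ k ∈ grid, (mIdx j x k) ∈ Mset := by
    intro k _
    rw [hMset, Fintype.mem_piFinset]
    intro i
    rw [Finset.mem_range]
    have h := mIdx_le j x k i
    have h2 : j i ≤ ∑ i', j i' :=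
      Finset.single_le_sum (f := fun i' => j i') (fun _ _ => Nat.zero_le _) (Finset.mem_univ i)
    omega
  have hregroup : ∑ k ∈ grid, ENNReal.ofReal ((Sv τ j f k * Wt j x k) ^ lam)
      = ∑ m ∈ Mset, ∑ k ∈ grid.filter (fun k => mIdx j x k = m),
          ENNReal.ofReal ((Sv τ j f k * Wt j x k) ^ lam) :=
    (Finset.sum_fiberwise_of_maps_to hmaps _).symm
  set vol : ℝ≥0∞ := ENNReal.ofReal (∏ i, (2 * (2:ℝ) ^ (-(j i : ℤ)))) with hvol
  have hvolpos : (0:ℝ) < ∏ i, (2 * (2:ℝ) ^ (-(j i : ℤ))) :=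
    Finset.prod_pos fun i _ => by positivity
  have hvol0 : vol ≠ 0 := by
    rw [hvol, ne_eq, ENNReal.ofReal_eq_zero, not_le]; exact hvolpos
  have hvoltop : vol ≠ ⊤ := by rw [hvol]; exact ENNReal.ofReal_ne_top
  -- per-fiber bound
  have hfiber : ∀ m ∈ Mset,
      ∑ k ∈ grid.filter (fun k => mIdx j x k = m),
        ENNReal.ofReal ((Sv τ j f k * Wt j x k) ^ lam) ≤
      ENNReal.ofReal (c4 ^ lam) *
        ENNReal.ofReal ((∏ i, (4 * ((4:ℝ)⁻¹) ^ (m i))) ^ lam * ∏ i, (2:ℝ) ^ (m i + 1)) *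
        M := by
    intro m _hm
    have hwnn : (0:ℝ) ≤ ∏ i, (4 * ((4:ℝ)⁻¹) ^ (m i)) :=
      Finset.prod_nonneg fun i _ => by positivity
    have hperk : ∀ k ∈ grid.filter (fun k => mIdx j x k = m),
        ENNReal.ofReal ((Sv τ j f k * Wt j x k) ^ lam) ≤
          ENNReal.ofReal ((∏ i, (4 * ((4:ℝ)⁻¹) ^ (m i))) ^ lam) * ENNReal.ofReal (c4 ^ lam) *
            ((∫⁻ t in Bk j x k, ENNReal.ofReal (P t ^ lam)) / vol) := by
      intro k hk
      rw [Finset.mem_filter] at hk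
      obtain ⟨hkg, hkm⟩ := hk
      have hw : Wt j x k ≤ ∏ i, (4 * ((4:ℝ)⁻¹) ^ (m i)) := by
        rw [← hkm]; exact Wt_le_shell j x k
      have hcs : c4 * (Sv τ j f k / c4) = Sv τ j f k := by field_simp
      have hr1 : (Sv τ j f k * Wt j x k) ^ lam ≤
          ((∏ i, (4 * ((4:ℝ)⁻¹) ^ (m i))) * (c4 * (Sv τ j f k / c4))) ^ lam := by
        apply Real.rpow_le_rpow (mul_nonneg (hSnn k) (hWnn k)) ?_ hlam0.le
        rw [hcs, mul_comm]
        exact mul_le_mul_of_nonneg_right hw (hSnn k)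
      have hr2 : ((∏ i, (4 * ((4:ℝ)⁻¹) ^ (m i))) * (c4 * (Sv τ j f k / c4))) ^ lam =
          (∏ i, (4 * ((4:ℝ)⁻¹) ^ (m i))) ^ lam * (c4 ^ lam * (Sv τ j f k / c4) ^ lam) := by
        rw [Real.mul_rpow hwnn (mul_nonneg hc4pos.le (div_nonneg (hSnn k) hc4pos.le)),
          Real.mul_rpow hc4pos.le (div_nonneg (hSnn k) hc4pos.le)]
      have hpt : ∀ t ∈ Bk j x k,
          ENNReal.ofReal ((Sv τ j f k / c4) ^ lam) ≤ ENNReal.ofReal (P t ^ lam) := by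
        intro t htk
        apply ENNReal.ofReal_le_ofReal
        apply Real.rpow_le_rpow (div_nonneg (hSnn k) hc4pos.le) ?_ hlam0.le
        rw [div_le_iff₀ hc4pos]
        have ht' : ∀ i, |t i - ctrP j x k i| ≤ (2:ℝ) ^ (-(j i : ℤ)) := by
          intro i
          have hmem := (Set.mem_pi.1 htk) i (Set.mem_univ i)
          rw [Set.mem_Icc] at hmem
          rw [abs_le]; constructor <;> linarith [hmem.1, hmem.2]
        have hbnd := Sv_le_peetre ha hτ hfc hfp j l x k t ht'
        calc Sv τ j f k ≤ ((2 + τ) ^ (a * (d:ℝ)) * (2:ℝ) ^ (a * (l1 l : ℝ))) * P t := hbnd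
        _ = P t * c4 := by rw [hc4]; ring
      have hint : ENNReal.ofReal ((Sv τ j f k / c4) ^ lam) * vol ≤
          ∫⁻ t in Bk j x k, ENNReal.ofReal (P t ^ lam) := by
        rw [hvol, ← volume_Bk j x k,
          ← lintegral_indicator_const (measurableSet_Bk j x k),
          ← lintegral_indicator (measurableSet_Bk j x k)]
        apply lintegral_mono
        intro t
        by_cases htk : t ∈ Bk j x k
        · rw [Set.indicator_of_mem htk, Set.indicator_of_mem htk]
          exact hpt t htk
        · rw [Set.indicator_of_notMem htk, Set.indicator_of_notMem htk]
      have hdiv : ENNReal.ofReal ((Sv τ j f k / c4) ^ lam) ≤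
          (∫⁻ t in Bk j x k, ENNReal.ofReal (P t ^ lam)) / vol :=
        (ENNReal.le_div_iff_mul_le (Or.inl hvol0) (Or.inl hvoltop)).2 hint
      calc ENNReal.ofReal ((Sv τ j f k * Wt j x k) ^ lam)
          ≤ ENNReal.ofReal ((∏ i, (4 * ((4:ℝ)⁻¹) ^ (m i))) ^ lam *
              (c4 ^ lam * (Sv τ j f k / c4) ^ lam)) := by
            apply ENNReal.ofReal_le_ofReal
            rw [← hr2]; exact hr1
      _ = ENNReal.ofReal ((∏ i, (4 * ((4:ℝ)⁻¹) ^ (m i))) ^ lam) * ENNReal.ofReal (c4 ^ lam) *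
            ENNReal.ofReal ((Sv τ j f k / c4) ^ lam) := by
            rw [ENNReal.ofReal_mul (Real.rpow_nonneg hwnn lam),
              ENNReal.ofReal_mul (Real.rpow_nonneg hc4pos.le lam), ← mul_assoc]
      _ ≤ ENNReal.ofReal ((∏ i, (4 * ((4:ℝ)⁻¹) ^ (m i))) ^ lam) * ENNReal.ofReal (c4 ^ lam) *
            ((∫⁻ t in Bk j x k, ENNReal.ofReal (P t ^ lam)) / vol) :=
            mul_le_mul_right hdiv _
    -- sum over the fiber, disjointness
    have hdisj : (↑(grid.filter (fun k => mIdx j x k = m)) :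
        Set (Fin d → ℤ)).PairwiseDisjoint (Bk j x) := by
      intro k hk k' hk' hne
      rw [Finset.mem_coe, Finset.mem_filter] at hk hk'
      exact Bk_disjoint j x hk.1 hk'.1 hne
    have hunion := lintegral_biUnion_finset (μ := volume) hdisj
      (fun k _ => measurableSet_Bk j x k) (fun t => ENNReal.ofReal (P t ^ lam))
    set Rm : Fin d → ℝ := fun i =>
      min ((2 ^ (m i) + 1) * (2:ℝ) ^ (-(j i : ℤ))) (Real.pi + 1) with hRm
    have hRpos : ∀ i, 0 < Rm i := fun i =>
      lt_min (by positivity) (by positivity)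
    have hsub : (⋃ k ∈ grid.filter (fun k => mIdx j x k = m), Bk j x k) ⊆
        Set.univ.pi fun i => Set.Icc (x i - Rm i) (x i + Rm i) := by
      intro t ht
      rw [Set.mem_iUnion₂] at ht
      obtain ⟨k, hk, htk⟩ := ht
      have hkm : mIdx j x k = m := (Finset.mem_filter.1 hk).2
      have hs := Bk_subset j x k htk
      rw [hkm] at hs
      exact hs
    have hbig : ∑ k ∈ grid.filter (fun k => mIdx j x k = m),
        ∫⁻ t in Bk j x k, ENNReal.ofReal (P t ^ lam) ≤
        M * ENNReal.ofReal (∏ i, (2 * Rm i)) := by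
      rw [← hunion]
      exact le_trans (lintegral_mono_set hsub) (hM Rm hRpos)
    have hratio : ENNReal.ofReal (∏ i, (2 * Rm i)) / vol ≤
        ENNReal.ofReal (∏ i, (2:ℝ) ^ (m i + 1)) := by
      rw [hvol, ← ENNReal.ofReal_div_of_pos hvolpos]
      apply ENNReal.ofReal_le_ofReal
      rw [← Finset.prod_div_distrib]
      refine Finset.prod_le_prod (fun i _ => by positivity) fun i _ => ?_
      rw [div_le_iff₀ (by positivity : (0:ℝ) < 2 * (2:ℝ) ^ (-(j i : ℤ)))]
      have hR : Rm i ≤ (2 ^ (m i) + 1) * (2:ℝ) ^ (-(j i : ℤ)) := min_le_left _ _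
      have h2m : (2:ℝ) ^ (m i) + 1 ≤ 2 ^ (m i + 1) := by
        rw [pow_succ]
        have h1m : (1:ℝ) ≤ 2 ^ (m i) := one_le_pow₀ (by norm_num)
        linarith
      have hzp : (0:ℝ) < (2:ℝ) ^ (-(j i : ℤ)) := by positivity
      nlinarith [hR, h2m, hzp]
    calc (∑ k ∈ grid.filter (fun k => mIdx j x k = m),
        ENNReal.ofReal ((Sv τ j f k * Wt j x k) ^ lam))
        ≤ ∑ k ∈ grid.filter (fun k => mIdx j x k = m),
          (ENNReal.ofReal ((∏ i, (4 * ((4:ℝ)⁻¹) ^ (m i))) ^ lam) * ENNReal.ofReal (c4 ^ lam) *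
            ((∫⁻ t in Bk j x k, ENNReal.ofReal (P t ^ lam)) / vol)) :=
          Finset.sum_le_sum hperk
    _ = ENNReal.ofReal ((∏ i, (4 * ((4:ℝ)⁻¹) ^ (m i))) ^ lam) * ENNReal.ofReal (c4 ^ lam) *
          ((∑ k ∈ grid.filter (fun k => mIdx j x k = m),
            ∫⁻ t in Bk j x k, ENNReal.ofReal (P t ^ lam)) / vol) := by
        rw [div_eq_mul_inv, Finset.sum_mul, ← Finset.mul_sum]
        refine congrArg _ (Finset.sum_congr rfl fun k _ => ?_)
        rw [div_eq_mul_inv]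
    _ ≤ ENNReal.ofReal ((∏ i, (4 * ((4:ℝ)⁻¹) ^ (m i))) ^ lam) * ENNReal.ofReal (c4 ^ lam) *
          ((M * ENNReal.ofReal (∏ i, (2 * Rm i))) / vol) := by
        gcongr
    _ = ENNReal.ofReal ((∏ i, (4 * ((4:ℝ)⁻¹) ^ (m i))) ^ lam) * ENNReal.ofReal (c4 ^ lam) *
          (M * (ENNReal.ofReal (∏ i, (2 * Rm i)) / vol)) := by
        rw [div_eq_mul_inv, div_eq_mul_inv, mul_assoc M]
    _ ≤ ENNReal.ofReal ((∏ i, (4 * ((4:ℝ)⁻¹) ^ (m i))) ^ lam) * ENNReal.ofReal (c4 ^ lam) *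
          (M * ENNReal.ofReal (∏ i, (2:ℝ) ^ (m i + 1))) := by
        gcongr
    _ = ENNReal.ofReal (c4 ^ lam) *
          ENNReal.ofReal ((∏ i, (4 * ((4:ℝ)⁻¹) ^ (m i))) ^ lam * ∏ i, (2:ℝ) ^ (m i + 1)) *
          M := by
        rw [ENNReal.ofReal_mul (Real.rpow_nonneg hwnn lam)]
        ring
  -- geometric series bound
  have hr4 : (2:ℝ) < (4:ℝ) ^ lam := by
    have h4 : (4:ℝ) ^ lam = (2:ℝ) ^ (2 * lam) := by
      rw [show (4:ℝ) = (2:ℝ) ^ (2:ℕ) by norm_num, ← Real.rpow_natCast (2:ℝ) 2,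
        ← Real.rpow_mul (by norm_num : (0:ℝ) ≤ 2)]
      norm_num
    rw [h4]
    calc (2:ℝ) = (2:ℝ) ^ (1:ℝ) := (Real.rpow_one 2).symm
    _ < (2:ℝ) ^ (2 * lam) := Real.rpow_lt_rpow_of_exponent_lt (by norm_num) (by linarith)
  have hrpos : (0:ℝ) < (4:ℝ) ^ lam := by positivity
  have hr0 : (0:ℝ) ≤ 2 / (4:ℝ) ^ lam := by positivity
  have hr1 : 2 / (4:ℝ) ^ lam < 1 := by rw [div_lt_one hrpos]; exact hr4
  have hK2nn : (0:ℝ) ≤ 8 * (1 - 2 / (4:ℝ) ^ lam)⁻¹ := by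
    have : (0:ℝ) < 1 - 2 / (4:ℝ) ^ lam := by linarith
    positivity
  have hgeom : ∑ m ∈ Mset,
      ENNReal.ofReal ((∏ i, (4 * ((4:ℝ)⁻¹) ^ (m i))) ^ lam * ∏ i, (2:ℝ) ^ (m i + 1)) ≤
      ENNReal.ofReal ((8 * (1 - 2 / (4:ℝ) ^ lam)⁻¹) ^ d) := by
    rw [← ENNReal.ofReal_sum_of_nonneg (fun m _ => by positivity)]
    apply ENNReal.ofReal_le_ofReal
    have hterm : ∀ m ∈ Mset,
        (∏ i, (4 * ((4:ℝ)⁻¹) ^ (m i))) ^ lam * ∏ i, (2:ℝ) ^ (m i + 1) =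
        ∏ i, ((4 * ((4:ℝ)⁻¹) ^ (m i)) ^ lam * (2:ℝ) ^ (m i + 1)) := by
      intro m _
      rw [← Real.finset_prod_rpow _ _ (fun i _ => by positivity) lam, ← Finset.prod_mul_distrib]
    rw [Finset.sum_congr rfl hterm, hMset]
    have hps : ∑ m ∈ Fintype.piFinset (fun _i : Fin d => Finset.range ((∑ i', j i') + 3)),
        ∏ i, ((4 * ((4:ℝ)⁻¹) ^ (m i)) ^ lam * (2:ℝ) ^ (m i + 1)) =
        ∏ _i : Fin d, ∑ mi ∈ Finset.range ((∑ i', j i') + 3),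
          ((4 * ((4:ℝ)⁻¹) ^ mi) ^ lam * (2:ℝ) ^ (mi + 1)) :=
      (Finset.prod_univ_sum _ (fun _i mi => (4 * ((4:ℝ)⁻¹) ^ mi) ^ lam * (2:ℝ) ^ (mi + 1))).symm
    rw [hps]
    have hgm : ∀ mi : ℕ, (4 * ((4:ℝ)⁻¹) ^ mi) ^ lam * (2:ℝ) ^ (mi + 1) =
        (2 * (4:ℝ) ^ lam) * (2 / (4:ℝ) ^ lam) ^ mi := by
      intro mi
      have e0 : ((4:ℝ) ^ mi) ^ lam = ((4:ℝ) ^ lam) ^ mi := by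
        rw [← Real.rpow_natCast (4:ℝ) mi, ← Real.rpow_mul (by norm_num : (0:ℝ) ≤ 4),
          mul_comm, Real.rpow_mul (by norm_num : (0:ℝ) ≤ 4), Real.rpow_natCast]
      have e1 : (((4:ℝ)⁻¹) ^ mi) ^ lam = (((4:ℝ) ^ lam) ^ mi)⁻¹ := by
        rw [inv_pow, Real.inv_rpow (by positivity), e0]
      rw [Real.mul_rpow (by norm_num) (by positivity), e1, div_pow, pow_succ]
      have hne : ((4:ℝ) ^ lam) ^ mi ≠ 0 := by positivity
      field_simp
    have hKi : ∀ _i : Fin d, (∑ mi ∈ Finset.range ((∑ i', j i') + 3),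
        ((4 * ((4:ℝ)⁻¹) ^ mi) ^ lam * (2:ℝ) ^ (mi + 1))) ≤ 8 * (1 - 2 / (4:ℝ) ^ lam)⁻¹ := by
      intro _i
      rw [Finset.sum_congr rfl fun mi _ => hgm mi, ← Finset.mul_sum]
      have h8 : 2 * (4:ℝ) ^ lam ≤ 8 := by
        have := Real.rpow_le_rpow_of_exponent_le (by norm_num : (1:ℝ) ≤ 4) hlam2
        rw [Real.rpow_one] at this
        linarith
      have hg := geom_le hr0 hr1 ((∑ i', j i') + 3)
      have hs0 : (0:ℝ) ≤ ∑ mi ∈ Finset.range ((∑ i', j i') + 3), (2 / (4:ℝ) ^ lam) ^ mi :=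
        Finset.sum_nonneg fun mi _ => by positivity
      have hinv0 : (0:ℝ) ≤ (1 - 2 / (4:ℝ) ^ lam)⁻¹ := by
        have : (0:ℝ) < 1 - 2 / (4:ℝ) ^ lam := by linarith
        positivity
      exact mul_le_mul h8 hg hs0 (by norm_num)
    calc (∏ i : Fin d, ∑ mi ∈ Finset.range ((∑ i', j i') + 3),
        ((4 * ((4:ℝ)⁻¹) ^ mi) ^ lam * (2:ℝ) ^ (mi + 1)))
        ≤ ∏ _i : Fin d, (8 * (1 - 2 / (4:ℝ) ^ lam)⁻¹) :=
          Finset.prod_le_prod (fun i _ => Finset.sum_nonneg fun mi _ => by positivity)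
            (fun i _ => hKi i)
    _ = (8 * (1 - 2 / (4:ℝ) ^ lam)⁻¹) ^ d := by
        rw [Finset.prod_const, Finset.card_univ, Fintype.card_fin]
  -- combine everything
  have hfinal : (‖QD φ φt j f x‖₊ : ℝ≥0∞) ^ lam ≤
      ENNReal.ofReal ((cc * C0' ^ d) ^ lam) * (ENNReal.ofReal (c4 ^ lam) *
        ENNReal.ofReal ((8 * (1 - 2 / (4:ℝ) ^ lam)⁻¹) ^ d) * M) := by
    refine h2.trans ?_
    refine mul_le_mul_right ?_ _
    rw [hregroup]
    calc (∑ m ∈ Mset, ∑ k ∈ grid.filter (fun k => mIdx j x k = m),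
        ENNReal.ofReal ((Sv τ j f k * Wt j x k) ^ lam))
        ≤ ∑ m ∈ Mset, (ENNReal.ofReal (c4 ^ lam) *
            ENNReal.ofReal ((∏ i, (4 * ((4:ℝ)⁻¹) ^ (m i))) ^ lam * ∏ i, (2:ℝ) ^ (m i + 1)) *
            M) := Finset.sum_le_sum hfiber
    _ = ENNReal.ofReal (c4 ^ lam) * (∑ m ∈ Mset,
          ENNReal.ofReal ((∏ i, (4 * ((4:ℝ)⁻¹) ^ (m i))) ^ lam * ∏ i, (2:ℝ) ^ (m i + 1))) *
          M := by
        rw [← Finset.sum_mul, ← Finset.mul_sum]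
    _ ≤ ENNReal.ofReal (c4 ^ lam) *
          ENNReal.ofReal ((8 * (1 - 2 / (4:ℝ) ^ lam)⁻¹) ^ d) * M := by
        gcongr
  refine hfinal.trans (le_of_eq ?_)
  have hexp : (c4 : ℝ) ^ lam = ((2 + τ) ^ (a * (d:ℝ))) ^ lam * (2:ℝ) ^ (a * lam * (l1 l : ℝ)) := by
    rw [hc4, Real.mul_rpow (by positivity) (by positivity),
      ← Real.rpow_mul (by norm_num : (0:ℝ) ≤ 2)]
    congr 2
    ring
  rw [hexp]
  rw [ENNReal.ofReal_mul (by positivity), ENNReal.ofReal_mul (by positivity),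
    ENNReal.ofReal_mul (by positivity)]
  ring

end AuxPMB

/-- **Lemma (pointwise maximal bound for quasi-interpolation operators).**
If `|φ_j(x)| ≤ C₀ 2^j/(1+2^j|x|)²` on `[-π,π]` and `φ̃` is local-supremum-dominated, then
`|Q_𝐣(f,φ,φ̃)(𝐱)| ≤ C 2^{a|𝐥|₁} (ℳ((𝒫_{2^{𝐣+𝐥},a} f)^λ)(𝐱))^{1/λ}` for all `𝐣, 𝐥 ∈ ℤ₊^d`,
`f ∈ C(𝕋^d)` and `𝐱`, with `C` independent of `𝐥`, `𝐣`, `𝐱`, `f`. -/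
theorem pointwise_maximal_bound
    (d : ℕ) (hd : 1 ≤ d)
    (a lam : ℝ) (ha : 0 < a) (hlam1 : 1 / 2 < lam) (hlam2 : lam ≤ 1)
    (φ φt : ℕ → ℝ → ℂ)
    (hφT : ∀ j : ℕ, TrigPoly1 j (φ j))
    (C0 : ℝ)
    (hφ : ∀ (j : ℕ) (x : ℝ), x ∈ Set.Icc (-Real.pi) Real.pi →
      ‖φ j x‖ ≤ C0 * (2 : ℝ) ^ (j : ℕ) / (1 + (2 : ℝ) ^ (j : ℕ) * |x|) ^ 2)
    (τ cc : ℝ) (hτ : 0 < τ) (hcc : 0 < cc)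
    (hdom : LocalDom d τ cc φt) :
    ∃ C : ℝ≥0∞, C ≠ ∞ ∧
      ∀ (j l : Fin d → ℕ) (f : (Fin d → ℝ) → ℂ), Continuous f → PeriodicD f →
        ∀ x : Fin d → ℝ,
          (‖QD φ φt j f x‖₊ : ℝ≥0∞) ≤
            C * ENNReal.ofReal ((2 : ℝ) ^ (a * (l1 l : ℝ))) *
              (maxHL d (fun t => (peetre (fun i => (2 : ℝ) ^ (j i + l i)) a f t) ^ lam) x) ^
                (1 / lam) := by
  classical
  have hlam0 : (0:ℝ) < lam := by linarith
  set C0' : ℝ := max C0 1 with hC0'def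
  have hC0'nn : (0:ℝ) ≤ C0' := le_trans zero_le_one (le_max_right _ _)
  have hφper : ∀ m, Function.Periodic (φ m) (2 * Real.pi) := fun m => (hφT m).periodic'
  have hφ' : ∀ (m : ℕ) (y : ℝ), y ∈ Set.Icc (-Real.pi) Real.pi →
      ‖φ m y‖ ≤ C0' * 2 ^ m / (1 + 2 ^ m * |y|) ^ 2 := by
    intro m y hy
    refine (hφ m y hy).trans ?_
    have hC : C0 ≤ C0' := le_max_left _ _
    gcongr
  -- positivity of the constant
  have hr4 : (2:ℝ) < (4:ℝ) ^ lam := by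
    have h4 : (4:ℝ) ^ lam = (2:ℝ) ^ (2 * lam) := by
      rw [show (4:ℝ) = (2:ℝ) ^ (2:ℕ) by norm_num, ← Real.rpow_natCast (2:ℝ) 2,
        ← Real.rpow_mul (by norm_num : (0:ℝ) ≤ 2)]
      norm_num
    rw [h4]
    calc (2:ℝ) = (2:ℝ) ^ (1:ℝ) := (Real.rpow_one 2).symm
    _ < (2:ℝ) ^ (2 * lam) := Real.rpow_lt_rpow_of_exponent_lt (by norm_num) (by linarith)
  have hrpos : (0:ℝ) < (4:ℝ) ^ lam := by positivity
  have hr1 : 2 / (4:ℝ) ^ lam < 1 := by rw [div_lt_one hrpos]; exact hr4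
  have hinvnn : (0:ℝ) ≤ (1 - 2 / (4:ℝ) ^ lam)⁻¹ := by
    have : (0:ℝ) < 1 - 2 / (4:ℝ) ^ lam := by linarith
    positivity
  have hKEnn : (0:ℝ) ≤ (cc * C0' ^ d) ^ lam * ((2 + τ) ^ (a * (d:ℝ))) ^ lam *
      (8 * (1 - 2 / (4:ℝ) ^ lam)⁻¹) ^ d := by
    have h1 : (0:ℝ) ≤ (cc * C0' ^ d) ^ lam := Real.rpow_nonneg (by positivity) lam
    have h2 : (0:ℝ) ≤ ((2 + τ) ^ (a * (d:ℝ))) ^ lam :=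
      Real.rpow_nonneg (Real.rpow_nonneg (by linarith) _) lam
    have h3 : (0:ℝ) ≤ (8 * (1 - 2 / (4:ℝ) ^ lam)⁻¹) ^ d := by positivity
    positivity
  refine ⟨ENNReal.ofReal (((cc * C0' ^ d) ^ lam * ((2 + τ) ^ (a * (d:ℝ))) ^ lam *
    (8 * (1 - 2 / (4:ℝ) ^ lam)⁻¹) ^ d) ^ (1 / lam)), ENNReal.ofReal_ne_top, ?_⟩
  intro j l f hfc hfp x
  have h := key_bound ha hlam1 hlam2 hτ hcc hC0'nn hφper hφ' hdom j l hfc hfp x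
  have hres : (‖QD φ φt j f x‖₊ : ℝ≥0∞) = ((‖QD φ φt j f x‖₊ : ℝ≥0∞) ^ lam) ^ (1 / lam) := by
    rw [← ENNReal.rpow_mul, mul_one_div, div_self hlam0.ne', ENNReal.rpow_one]
  rw [hres]
  calc ((‖QD φ φt j f x‖₊ : ℝ≥0∞) ^ lam) ^ (1 / lam)
      ≤ (ENNReal.ofReal ((cc * C0' ^ d) ^ lam * ((2 + τ) ^ (a * (d:ℝ))) ^ lam *
          (8 * (1 - 2 / (4:ℝ) ^ lam)⁻¹) ^ d) *
          ENNReal.ofReal ((2:ℝ) ^ (a * lam * (l1 l : ℝ))) *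
          maxHL d (fun t => peetre (fun i => (2:ℝ) ^ (j i + l i)) a f t ^ lam) x) ^ (1 / lam) :=
        ENNReal.rpow_le_rpow h (by positivity)
  _ = ENNReal.ofReal ((cc * C0' ^ d) ^ lam * ((2 + τ) ^ (a * (d:ℝ))) ^ lam *
          (8 * (1 - 2 / (4:ℝ) ^ lam)⁻¹) ^ d) ^ (1 / lam) *
        ENNReal.ofReal ((2:ℝ) ^ (a * lam * (l1 l : ℝ))) ^ (1 / lam) *
        (maxHL d (fun t => peetre (fun i => (2:ℝ) ^ (j i + l i)) a f t ^ lam) x) ^ (1 / lam) := by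
      rw [ENNReal.mul_rpow_of_nonneg _ _ (by positivity : (0:ℝ) ≤ 1 / lam),
        ENNReal.mul_rpow_of_nonneg _ _ (by positivity : (0:ℝ) ≤ 1 / lam)]
  _ = ENNReal.ofReal (((cc * C0' ^ d) ^ lam * ((2 + τ) ^ (a * (d:ℝ))) ^ lam *
          (8 * (1 - 2 / (4:ℝ) ^ lam)⁻¹) ^ d) ^ (1 / lam)) *
        ENNReal.ofReal ((2:ℝ) ^ (a * (l1 l : ℝ))) *
        (maxHL d (fun t => peetre (fun i => (2:ℝ) ^ (j i + l i)) a f t ^ lam) x) ^ (1 / lam) := by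
      rw [ENNReal.ofReal_rpow_of_nonneg hKEnn (by positivity : (0:ℝ) ≤ 1 / lam),
        ENNReal.ofReal_rpow_of_nonneg (by positivity : (0:ℝ) ≤ (2:ℝ) ^ (a * lam * (l1 l : ℝ)))
          (by positivity : (0:ℝ) ≤ 1 / lam)]
      have hexp2 : ((2:ℝ) ^ (a * lam * (l1 l : ℝ))) ^ (1 / lam) = (2:ℝ) ^ (a * (l1 l : ℝ)) := by
        rw [← Real.rpow_mul (by norm_num : (0:ℝ) ≤ 2)]
        congr 1
        field_simp
      rw [hexp2]

end Smolyak
end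
end

section
/- (Fourier coefficients of a quasi-interpolation operator.) Let j ∈ ℤ₊, let φ_j ∈ 𝒯_j^1 and φ̃_j ∈ L₁(𝕋), and let f ∈ C(𝕋) have an absolutely convergent Fourier series. Then for every k ∈ ℤ, the k-th Fourier coefficient of Q_j(f,φ,φ̃) equals φ̂_j(k)·Σ_{ℓ∈ℤ} φ̃̂_j(k+ℓ2^j)·f̂(k+ℓ2^j). In particular, if φ̂_j(0) = 1, then the 0-th Fourier coefficient of Q_j(e^{i2^u·},φ,φ̃) equals φ̃̂_j(2^u) when j ≤ u, and equals 0 when j > u. -/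
open MeasureTheory Complex Filter Set
open scoped BigOperators ENNReal NNReal Topology

noncomputable section

namespace Smolyak

/-! ### Auxiliary lemmas for `fourier_coefficients_of_Q` -/

lemma intInt_exp (m : ℤ) : (∫ x in (-Real.pi)..Real.pi, Complex.exp (Complex.I * m * x)) =
    if m = 0 then (2 * Real.pi : ℂ) else 0 := by
  rcases eq_or_ne m 0 with h | h
  · subst h
    simp only [Int.cast_zero, mul_zero, zero_mul, Complex.exp_zero, if_pos rfl]
    rw [intervalIntegral.integral_const]
    rw [sub_neg_eq_add, Complex.real_smul]
    push_cast; ring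
  · have hc : Complex.I * m ≠ 0 := by
      simp [Complex.I_ne_zero, h]
    rw [if_neg h]
    rw [integral_exp_mul_complex hc]
    have h1 : Complex.I * m * ((Real.pi : ℝ) : ℂ) =
        Complex.I * m * ((-Real.pi : ℝ) : ℂ) + (m : ℂ) * (2 * (Real.pi : ℂ) * Complex.I) := by
      push_cast; ring
    rw [h1, Complex.exp_add, Complex.exp_int_mul_two_pi_mul_I, mul_one, sub_self, zero_div]

lemma fc1_exp (l k : ℤ) :
    fc1 (fun x => Complex.exp (Complex.I * l * x)) k = if l = k then 1 else 0 := by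
  unfold fc1
  have h : ∀ x : ℝ, Complex.exp (Complex.I * l * x) * Complex.exp (-Complex.I * k * x)
      = Complex.exp (Complex.I * ((l - k : ℤ)) * x) := by
    intro x; rw [← Complex.exp_add]; congr 1; push_cast; ring
  simp_rw [h, intInt_exp (l - k), sub_eq_zero]
  rcases eq_or_ne l k with h' | h'
  · rw [if_pos h', if_pos h', Complex.real_smul]
    have : (Real.pi : ℂ) ≠ 0 := by exact_mod_cast Real.pi_ne_zero
    push_cast
    field_simp
  · rw [if_neg h', if_neg h', smul_zero]

lemma fc1_finsum (s : Finset ℤ) (a : ℤ → ℂ) (k : ℤ) :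
    fc1 (fun x => ∑ l ∈ s, a l * Complex.exp (Complex.I * l * x)) k
      = if k ∈ s then a k else 0 := by
  unfold fc1
  have h1 : ∀ x : ℝ,
      (∑ l ∈ s, a l * Complex.exp (Complex.I * l * x)) * Complex.exp (-Complex.I * k * x)
        = ∑ l ∈ s, a l * (Complex.exp (Complex.I * l * x) * Complex.exp (-Complex.I * k * x)) := by
    intro x; rw [Finset.sum_mul]; exact Finset.sum_congr rfl fun l _ => by ring
  simp_rw [h1]
  rw [intervalIntegral.integral_finset_sum (fun l _ =>
    (Continuous.intervalIntegrable (by fun_prop) _ _))]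
  rw [Finset.smul_sum]
  have h2 : ∀ l ∈ s, ((2 * Real.pi)⁻¹ : ℝ) • ∫ x in (-Real.pi)..Real.pi,
      a l * (Complex.exp (Complex.I * l * x) * Complex.exp (-Complex.I * k * x))
      = a l * (if l = k then 1 else 0) := by
    intro l _
    rw [intervalIntegral.integral_const_mul, Complex.real_smul, ← mul_assoc,
      mul_comm _ (a l), mul_assoc, ← Complex.real_smul]
    congr 1
    have := fc1_exp l k
    unfold fc1 at this
    exact this
  rw [Finset.sum_congr rfl h2]
  simp [mul_ite, Finset.sum_ite_eq']

lemma Aset_eq (j : ℕ) : ∃ a : ℤ, Aset j = Finset.Ico a (a + 2 ^ j) := by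
  rcases Nat.eq_zero_or_pos j with h | h
  · exact ⟨0, by subst h; decide⟩
  · refine ⟨-(2 ^ (j - 1)), ?_⟩
    have h2 : (2 : ℤ) ^ j = 2 * 2 ^ (j - 1) := by
      rw [← pow_succ']; congr 1; omega
    ext k
    simp only [Aset, Finset.mem_filter, Finset.mem_Icc, Finset.mem_Ico]
    omega

lemma discrete_orth (j : ℕ) (n : ℤ) :
    ((2 : ℂ) ^ (-(j : ℤ))) * ∑ m ∈ Aset j, Complex.exp (Complex.I * n * (xpt j m : ℝ)) =
      if ((2 : ℤ) ^ j) ∣ n then 1 else 0 := by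
  obtain ⟨a, ha⟩ := Aset_eq j
  have h2 : ((2 : ℂ) ^ j) ≠ 0 := pow_ne_zero _ two_ne_zero
  have hπ : (Real.pi : ℂ) ≠ 0 := by exact_mod_cast Real.pi_ne_zero
  set z : ℂ := Complex.exp (2 * Real.pi * Complex.I * n / (2 : ℂ) ^ j) with hz
  have hzm : ∀ m : ℤ, Complex.exp (Complex.I * n * (xpt j m : ℝ)) = z ^ m := by
    intro m
    rw [hz, ← Complex.exp_int_mul]
    congr 1
    simp only [xpt]; push_cast
    field_simp
  have hzN : z ^ ((2 : ℕ) ^ j) = 1 := by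
    rw [hz, ← Complex.exp_nat_mul]
    rw [show ((2 ^ j : ℕ) : ℂ) * (2 * Real.pi * Complex.I * n / (2 : ℂ) ^ j)
        = (n : ℂ) * (2 * (Real.pi : ℂ) * Complex.I) by push_cast; field_simp]
    exact Complex.exp_int_mul_two_pi_mul_I n
  have hz0 : z ≠ 0 := Complex.exp_ne_zero _
  simp_rw [ha, hzm]
  have hico : Finset.Ico a (a + 2 ^ j) =
      Finset.map ⟨fun t : ℕ => a + t, show Function.Injective (fun t : ℕ => a + (t:ℤ)) by intro x y hxy; simpa using hxy⟩
        (Finset.range (2 ^ j)) := by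
    have hpow : ((2 ^ j : ℕ) : ℤ) = 2 ^ j := by push_cast; ring
    ext k
    simp only [Finset.mem_Ico, Finset.mem_map, Finset.mem_range, Function.Embedding.coeFn_mk]
    constructor
    · intro hk; refine ⟨(k - a).toNat, by omega, by omega⟩
    · rintro ⟨t, ht, rfl⟩; omega
  rw [hico, Finset.sum_map]
  simp only [Function.Embedding.coeFn_mk]
  have hsum : ∀ i : ℕ, z ^ (a + (i : ℤ)) = z ^ a * z ^ i := by
    intro i; rw [zpow_add₀ hz0, zpow_natCast]
  simp_rw [hsum, ← Finset.mul_sum]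
  by_cases hd : ((2 : ℤ) ^ j) ∣ n
  · have hz1 : z = 1 := by
      obtain ⟨c, hc⟩ := hd
      rw [hz]
      rw [show 2 * Real.pi * Complex.I * n / (2 : ℂ) ^ j = (c : ℂ) * (2 * Real.pi * Complex.I) by
        rw [hc]; push_cast; field_simp]
      exact Complex.exp_int_mul_two_pi_mul_I c
    rw [if_pos hd, hz1]
    simp only [one_zpow, one_pow, Finset.sum_const, Finset.card_range, nsmul_eq_mul, mul_one,
      one_mul]
    rw [zpow_neg, inv_mul_eq_one₀ (by exact_mod_cast h2 : ((2 : ℂ) ^ (j : ℤ)) ≠ 0)]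
    push_cast
    norm_num
  · have hz1 : z ≠ 1 := by
      intro h1
      apply hd
      rw [hz, Complex.exp_eq_one_iff] at h1
      obtain ⟨c, hc⟩ := h1
      have hA : (2 * (Real.pi : ℂ) * Complex.I) ≠ 0 := by
        simp [Real.pi_ne_zero, Complex.I_ne_zero]
      have hn : (2 * (Real.pi : ℂ) * Complex.I) * (n : ℂ)
          = (2 * (Real.pi : ℂ) * Complex.I) * (((2 : ℤ) ^ j * c : ℤ) : ℂ) := by
        field_simp at hc
        push_cast
        linear_combination (2 * (Real.pi : ℂ) * Complex.I) * hc
      have := mul_left_cancel₀ hA hn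
      exact ⟨c, by exact_mod_cast this⟩
    rw [if_neg hd, geom_sum_eq hz1]
    rw [hzN]
    simp

lemma norm_exp_I_int_mul (k : ℤ) (t : ℝ) : ‖Complex.exp (Complex.I * k * t)‖ = 1 := by
  rw [show Complex.I * k * t = ((k * t : ℝ) : ℂ) * Complex.I by push_cast; ring]
  exact Complex.norm_exp_ofReal_mul_I _

lemma norm_exp_neg_I_int_mul (k : ℤ) (t : ℝ) : ‖Complex.exp (-Complex.I * k * t)‖ = 1 := by
  rw [show -Complex.I * k * t = ((-(k * t) : ℝ) : ℂ) * Complex.I by push_cast; ring]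
  exact Complex.norm_exp_ofReal_mul_I _

lemma fourier_eq_exp (n : ℤ) (t : ℝ) :
    (fourier n (t : AddCircle (2 * Real.pi)) : ℂ) = Complex.exp (Complex.I * n * t) := by
  rw [fourier_coe_apply]
  congr 1
  have h : ((2 * Real.pi : ℝ) : ℂ) ≠ 0 := by
    push_cast
    simp [Real.pi_ne_zero]
  push_cast
  push_cast at h
  rw [show 2 * (Real.pi : ℂ) * Complex.I * n * t = Complex.I * n * t * (2 * Real.pi) by ring,
    mul_div_assoc, div_self h, mul_one]

lemma fourier_inversion (f : ℝ → ℂ) (hf : Continuous f)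
    (hper : Function.Periodic f (2 * Real.pi))
    (hsum : Summable fun k : ℤ => ‖fc1 f k‖) (x : ℝ) :
    HasSum (fun n : ℤ => fc1 f n * Complex.exp (Complex.I * n * x)) (f x) := by
  haveI : Fact (0 < 2 * Real.pi) := ⟨by positivity⟩
  set F : C(AddCircle (2 * Real.pi), ℂ) := ⟨hper.lift, hf.quotient_liftOn' _⟩ with hF
  have hFcoe : ∀ t : ℝ, F (t : AddCircle (2 * Real.pi)) = f t := fun t => hper.lift_coe t
  have hcoeff : ∀ n : ℤ, fourierCoeff (F : AddCircle (2 * Real.pi) → ℂ) n = fc1 f n := by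
    intro n
    rw [fourierCoeff_eq_intervalIntegral _ n (-Real.pi)]
    have hend : -Real.pi + 2 * Real.pi = Real.pi := by ring
    rw [hend]
    unfold fc1
    rw [one_div]
    congr 1
    apply intervalIntegral.integral_congr
    intro t _
    show (fourier (-n) (t : AddCircle (2 * Real.pi)) : ℂ) • F (t : AddCircle (2 * Real.pi))
      = f t * Complex.exp (-Complex.I * n * t)
    rw [fourier_eq_exp, hFcoe, smul_eq_mul, mul_comm]
    congr 2
    push_cast
    ring
  have hs : Summable (fourierCoeff (F : AddCircle (2 * Real.pi) → ℂ)) := by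
    have : (fourierCoeff (F : AddCircle (2 * Real.pi) → ℂ)) = fc1 f := funext hcoeff
    rw [this]
    exact hsum.of_norm
  have H := has_pointwise_sum_fourier_series_of_summable (f := F) hs (x : AddCircle (2 * Real.pi))
  rw [hFcoe] at H
  apply H.congr_fun
  intro n
  rw [hcoeff, fourier_eq_exp, smul_eq_mul, mul_comm]

lemma norm_fc1_le (g : ℝ → ℂ) (k : ℤ) :
    ‖fc1 g k‖ ≤ (2 * Real.pi)⁻¹ * ∫ t in (-Real.pi)..Real.pi, ‖g t‖ := by
  unfold fc1
  rw [norm_smul, Real.norm_eq_abs, abs_of_pos (by positivity)]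
  apply mul_le_mul_of_nonneg_left _ (by positivity)
  calc ‖∫ x in (-Real.pi)..Real.pi, g x * Complex.exp (-Complex.I * k * x)‖
      ≤ ∫ x in (-Real.pi)..Real.pi, ‖g x * Complex.exp (-Complex.I * k * x)‖ :=
        intervalIntegral.norm_integral_le_integral_norm (by linarith [Real.pi_pos])
    _ = ∫ x in (-Real.pi)..Real.pi, ‖g x‖ := by
        apply intervalIntegral.integral_congr
        intro t _
        simp only [norm_mul, norm_exp_neg_I_int_mul, mul_one]

lemma summable_conv_terms (f g : ℝ → ℂ)
    (hsum : Summable fun k : ℤ => ‖fc1 f k‖) (x : ℝ) :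
    Summable fun n : ℤ => fc1 f n * fc1 g n * Complex.exp (Complex.I * n * x) := by
  apply Summable.of_norm
  apply Summable.of_nonneg_of_le (fun n => norm_nonneg _) (fun n => ?_)
    (hsum.mul_right ((2 * Real.pi)⁻¹ * ∫ t in (-Real.pi)..Real.pi, ‖g t‖))
  rw [norm_mul, norm_mul, norm_exp_I_int_mul, mul_one]
  exact mul_le_mul_of_nonneg_left (norm_fc1_le _ _) (norm_nonneg _)

lemma conv1_eq_tsum (f g : ℝ → ℂ) (hf : Continuous f)
    (hper : Function.Periodic f (2 * Real.pi))
    (hsum : Summable fun k : ℤ => ‖fc1 f k‖)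
    (hg : IntegrableOn g (Set.Icc (-Real.pi) Real.pi)) (y : ℝ) :
    conv1 f g y = ∑' n : ℤ, fc1 f n * fc1 g n * Complex.exp (Complex.I * n * y) := by
  have hpi : -Real.pi ≤ Real.pi := by linarith [Real.pi_pos]
  have hgI : IntegrableOn g (Set.Ioc (-Real.pi) Real.pi) := hg.mono_set Set.Ioc_subset_Icc_self
  set F : ℤ → ℝ → ℂ := fun n t =>
    fc1 f n * Complex.exp (Complex.I * n * y) * (Complex.exp (-Complex.I * n * t) * g t) with hF
  have hpt : ∀ t : ℝ, f (y - t) * g t = ∑' n : ℤ, F n t := by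
    intro t
    have h1 := (fourier_inversion f hf hper hsum (y - t)).tsum_eq
    rw [← h1, ← tsum_mul_right]
    apply tsum_congr
    intro n
    rw [hF]
    have : Complex.exp (Complex.I * n * ((y - t : ℝ) : ℂ))
        = Complex.exp (Complex.I * n * y) * Complex.exp (-Complex.I * n * t) := by
      rw [← Complex.exp_add]; congr 1; push_cast; ring
    rw [this]; ring
  unfold conv1
  rw [intervalIntegral.integral_of_le hpi]
  calc (2 * Real.pi)⁻¹ • ∫ t in Set.Ioc (-Real.pi) Real.pi, f (y - t) * g t
      = (2 * Real.pi)⁻¹ • ∫ t in Set.Ioc (-Real.pi) Real.pi, ∑' n : ℤ, F n t := by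
        congr 1; apply setIntegral_congr_fun measurableSet_Ioc; intro t _; exact hpt t
    _ = (2 * Real.pi)⁻¹ • ∑' n : ℤ, ∫ t in Set.Ioc (-Real.pi) Real.pi, F n t := by
        congr 1
        apply integral_tsum
        · intro n
          exact (aestronglyMeasurable_const.mul
            ((Complex.continuous_exp.comp (by fun_prop)).aestronglyMeasurable.mul hgI.1))
        · have hB : (∫⁻ t in Set.Ioc (-Real.pi) Real.pi, (‖g t‖₊ : ℝ≥0∞)) ≠ ⊤ :=
            hgI.2.ne
          have heq : ∀ n : ℤ, (∫⁻ t in Set.Ioc (-Real.pi) Real.pi, (‖F n t‖₊ : ℝ≥0∞))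
              = (‖fc1 f n‖₊ : ℝ≥0∞) * ∫⁻ t in Set.Ioc (-Real.pi) Real.pi, (‖g t‖₊ : ℝ≥0∞) := by
            intro n
            rw [← lintegral_const_mul' _ _ ENNReal.coe_ne_top]
            apply lintegral_congr
            intro t
            rw [hF]
            simp only [nnnorm_mul]
            rw [show ‖Complex.exp (Complex.I * n * y)‖₊ = 1 by
                  ext; simpa using norm_exp_I_int_mul n y,
                show ‖Complex.exp (-Complex.I * n * t)‖₊ = 1 by
                  ext; simpa using norm_exp_neg_I_int_mul n t]
            push_cast
            ring
          simp_rw [enorm_eq_nnnorm, heq]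
          rw [ENNReal.tsum_mul_right]
          exact ENNReal.mul_ne_top (by
            rw [ENNReal.tsum_coe_ne_top_iff_summable]
            exact NNReal.summable_coe.mp (by simpa using hsum)) hB
    _ = ∑' n : ℤ, fc1 f n * fc1 g n * Complex.exp (Complex.I * n * y) := by
        rw [Complex.real_smul, ← tsum_mul_left]
        apply tsum_congr
        intro n
        rw [← intervalIntegral.integral_of_le hpi]
        have h1 : (∫ t in (-Real.pi)..Real.pi, F n t)
            = fc1 f n * Complex.exp (Complex.I * n * y)
              * ∫ t in (-Real.pi)..Real.pi, g t * Complex.exp (-Complex.I * n * t) := by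
          rw [← intervalIntegral.integral_const_mul]
          apply intervalIntegral.integral_congr
          intro t _
          rw [hF]; ring
        rw [h1]
        rw [show fc1 g n = ((2 * Real.pi)⁻¹ : ℝ) •
            ∫ t in (-Real.pi)..Real.pi, g t * Complex.exp (-Complex.I * (n : ℂ) * (t : ℂ)) from
          rfl]
        rw [Complex.real_smul]
        push_cast
        ring

lemma Q1_fc1 (j : ℕ) (φ φt : ℕ → ℝ → ℂ) (hφT : TrigPoly1 j (φ j))
    (hφtint : IntegrableOn (φt j) (Set.Icc (-Real.pi) Real.pi))
    (f : ℝ → ℂ) (hf : Continuous f) (hfper : Function.Periodic f (2 * Real.pi))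
    (hsum : Summable fun k : ℤ => ‖fc1 f k‖) (k : ℤ) :
    fc1 (Q1 φ φt j f) k =
      fc1 (φ j) k * ∑' ℓ : ℤ, fc1 (φt j) (k + ℓ * 2 ^ j) * fc1 f (k + ℓ * 2 ^ j) := by
  obtain ⟨c, hc0, hcφ⟩ := hφT
  set s : Finset ℤ := Finset.Icc (-(2 ^ j : ℤ)) (2 ^ j) with hs
  set G : ℤ → ℂ := fun m => conv1 f (φt j) (xpt j m) with hG
  set a : ℤ → ℂ := fun l => c l * ((2 : ℂ) ^ (-(j : ℤ)) *
      ∑ m ∈ Aset j, G m * Complex.exp (-Complex.I * l * (xpt j m : ℝ))) with ha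
  have hQ : Q1 φ φt j f = fun x : ℝ => ∑ l ∈ s, a l * Complex.exp (Complex.I * l * x) := by
    funext x
    unfold Q1
    have e1 : ∀ m ∈ Aset j, conv1 f (φt j) (xpt j m) * φ j (x - xpt j m)
        = ∑ l ∈ s, G m * (c l *
            (Complex.exp (Complex.I * l * x) * Complex.exp (-Complex.I * l * (xpt j m : ℝ)))) := by
      intro m _
      rw [hcφ (x - xpt j m), Finset.mul_sum]
      apply Finset.sum_congr rfl
      intro l _
      rw [show Complex.exp (Complex.I * l * ((x - xpt j m : ℝ) : ℂ))
            = Complex.exp (Complex.I * l * x) * Complex.exp (-Complex.I * l * (xpt j m : ℝ)) by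
          rw [← Complex.exp_add]; congr 1; push_cast; ring]
    rw [Finset.sum_congr rfl e1, Finset.sum_comm, Finset.mul_sum]
    apply Finset.sum_congr rfl
    intro l _
    rw [ha]
    simp only [Finset.mul_sum, Finset.sum_mul]
    apply Finset.sum_congr rfl
    intro m _
    ring
  have hφc : fc1 (φ j) k = if k ∈ s then c k else 0 := by
    have h4 : φ j = fun x : ℝ => ∑ l ∈ s, c l * Complex.exp (Complex.I * l * x) := funext hcφ
    rw [h4, fc1_finsum]
  have hQc : fc1 (Q1 φ φt j f) k = if k ∈ s then a k else 0 := by rw [hQ, fc1_finsum]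
  have hconv : ∀ y : ℝ, conv1 f (φt j) y
      = ∑' n : ℤ, fc1 f n * fc1 (φt j) n * Complex.exp (Complex.I * n * y) :=
    conv1_eq_tsum f (φt j) hf hfper hsum hφtint
  have hskey : (2 : ℂ) ^ (-(j : ℤ)) *
        ∑ m ∈ Aset j, G m * Complex.exp (-Complex.I * k * (xpt j m : ℝ))
      = ∑' ℓ : ℤ, fc1 (φt j) (k + ℓ * 2 ^ j) * fc1 f (k + ℓ * 2 ^ j) := by
    have h1 : ∀ m ∈ Aset j, G m * Complex.exp (-Complex.I * k * (xpt j m : ℝ))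
        = ∑' n : ℤ, fc1 f n * fc1 (φt j) n * Complex.exp (Complex.I * n * (xpt j m : ℝ))
            * Complex.exp (-Complex.I * k * (xpt j m : ℝ)) := by
      intro m _
      rw [hG]
      simp only
      rw [hconv (xpt j m), ← tsum_mul_right]
    rw [Finset.sum_congr rfl h1,
      ← Summable.tsum_finsetSum (fun m _ => ((summable_conv_terms f (φt j) hsum (xpt j m)).mul_right _)),
      ← tsum_mul_left]
    have h2 : ∀ n : ℤ, ((2 : ℂ) ^ (-(j : ℤ)) *
          ∑ m ∈ Aset j, fc1 f n * fc1 (φt j) n * Complex.exp (Complex.I * n * (xpt j m : ℝ))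
            * Complex.exp (-Complex.I * k * (xpt j m : ℝ)))
        = fc1 (φt j) n * fc1 f n * (if ((2 : ℤ) ^ j) ∣ (n - k) then 1 else 0) := by
      intro n
      have h3 : ((2 : ℂ) ^ (-(j : ℤ)) *
            ∑ m ∈ Aset j, fc1 f n * fc1 (φt j) n * Complex.exp (Complex.I * n * (xpt j m : ℝ))
              * Complex.exp (-Complex.I * k * (xpt j m : ℝ)))
          = fc1 (φt j) n * fc1 f n * ((2 : ℂ) ^ (-(j : ℤ)) *
              ∑ m ∈ Aset j, Complex.exp (Complex.I * ((n - k : ℤ)) * (xpt j m : ℝ))) := by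
        simp only [Finset.mul_sum]
        apply Finset.sum_congr rfl
        intro m _
        rw [show Complex.exp (Complex.I * ((n - k : ℤ)) * (xpt j m : ℝ))
              = Complex.exp (Complex.I * n * (xpt j m : ℝ))
                * Complex.exp (-Complex.I * k * (xpt j m : ℝ)) by
            rw [← Complex.exp_add]; congr 1; push_cast; ring]
        ring
      rw [h3, discrete_orth j (n - k)]
    rw [tsum_congr h2]
    have hinj : Function.Injective (fun ℓ : ℤ => k + ℓ * 2 ^ j) := by
      intro x y hxy
      simp only at hxy
      have h2j : (2 : ℤ) ^ j ≠ 0 := by positivity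
      have : x * 2 ^ j = y * 2 ^ j := by omega
      exact mul_right_cancel₀ h2j this
    have hrange : Function.support
          (fun n : ℤ => fc1 (φt j) n * fc1 f n * (if ((2 : ℤ) ^ j) ∣ (n - k) then 1 else 0))
        ⊆ Set.range (fun ℓ : ℤ => k + ℓ * 2 ^ j) := by
      intro n hn
      by_cases hd : ((2 : ℤ) ^ j) ∣ (n - k)
      · obtain ⟨d, hdn⟩ := hd
        exact ⟨d, by simp only; linear_combination -hdn⟩
      · exact absurd (by simp [if_neg hd]) hn
    rw [← hinj.tsum_eq hrange]
    apply tsum_congr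
    intro ℓ
    beta_reduce
    rw [if_pos ⟨ℓ, by ring⟩, mul_one]
  rw [hQc, hφc]
  by_cases hk : k ∈ s
  · rw [if_pos hk, if_pos hk, ha, ← hskey]
  · rw [if_neg hk, if_neg hk, zero_mul]

/-- **Lemma (Fourier coefficients of a quasi-interpolation operator).**
For `φ_j ∈ 𝒯_j^1`, `φ̃_j ∈ L₁(𝕋)` and `f ∈ C(𝕋)` with absolutely convergent Fourier series,
`(Q_j(f,φ,φ̃))^(k) = φ̂_j(k) ∑_{ℓ∈ℤ} φ̃̂_j(k+ℓ2^j) f̂(k+ℓ2^j)`. In particular, if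
`φ̂_j(0) = 1`, then `(Q_j(e^{i2^u·},φ,φ̃))^(0) = φ̃̂_j(2^u)` for `j ≤ u` and `= 0` for `j > u`. -/
theorem fourier_coefficients_of_Q
    (j : ℕ) (φ φt : ℕ → ℝ → ℂ)
    (hφT : TrigPoly1 j (φ j))
    (hφtper : Function.Periodic (φt j) (2 * Real.pi))
    (hφtint : IntegrableOn (φt j) (Set.Icc (-Real.pi) Real.pi))
    (f : ℝ → ℂ) (hf : Continuous f) (hfper : Function.Periodic f (2 * Real.pi))
    (hsum : Summable fun k : ℤ => ‖fc1 f k‖) :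
    (∀ k : ℤ, fc1 (Q1 φ φt j f) k =
        fc1 (φ j) k * ∑' ℓ : ℤ, fc1 (φt j) (k + ℓ * 2 ^ j) * fc1 f (k + ℓ * 2 ^ j)) ∧
    (fc1 (φ j) 0 = 1 → ∀ u : ℕ,
      fc1 (Q1 φ φt j fun x : ℝ => Complex.exp (Complex.I * (2 : ℂ) ^ u * (x : ℂ))) 0 =
        if j ≤ u then fc1 (φt j) (2 ^ u) else 0) := by
  constructor
  · intro k
    exact Q1_fc1 j φ φt hφT hφtint f hf hfper hsum k
  · intro hφ0 u
    have h2c : (((2 : ℤ) ^ u : ℤ) : ℂ) = (2 : ℂ) ^ u := by push_cast; ring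
    set fu : ℝ → ℂ := fun x : ℝ => Complex.exp (Complex.I * (2 : ℂ) ^ u * (x : ℂ)) with hfu
    have hfu' : fu = fun x : ℝ => Complex.exp (Complex.I * (((2 : ℤ) ^ u : ℤ) : ℂ) * (x : ℂ)) := by
      funext x; rw [hfu, h2c]
    have hfc : ∀ n : ℤ, fc1 fu n = if ((2 : ℤ) ^ u = n) then 1 else 0 := by
      intro n; rw [hfu', fc1_exp]
    have hcont : Continuous fu := by fun_prop
    have hperu : Function.Periodic fu (2 * Real.pi) := by
      intro x
      simp only [hfu]
      rw [show Complex.I * (2 : ℂ) ^ u * ((x + 2 * Real.pi : ℝ) : ℂ)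
            = Complex.I * (2 : ℂ) ^ u * (x : ℂ)
              + (((2 : ℤ) ^ u : ℤ) : ℂ) * (2 * Real.pi * Complex.I) by push_cast; ring,
        Complex.exp_add, Complex.exp_int_mul_two_pi_mul_I, mul_one]
    have hsumu : Summable fun n : ℤ => ‖fc1 fu n‖ := by
      apply summable_of_ne_finset_zero (s := ({(2 : ℤ) ^ u} : Finset ℤ))
      intro n hn
      rw [hfc, if_neg (fun h => hn (by simp [h.symm])), norm_zero]
    have hmain := Q1_fc1 j φ φt hφT hφtint fu hcont hperu hsumu 0
    rw [hmain, hφ0, one_mul]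
    by_cases hju : j ≤ u
    · rw [if_pos hju]
      have h2j : (2 : ℤ) ^ j ≠ 0 := by positivity
      have hpow : (2 : ℤ) ^ (u - j) * 2 ^ j = 2 ^ u := by
        rw [← pow_add]; congr 1; omega
      rw [tsum_eq_single ((2 : ℤ) ^ (u - j)) ?_]
      · have he : (0 : ℤ) + (2 : ℤ) ^ (u - j) * 2 ^ j = 2 ^ u := by rw [zero_add, hpow]
        rw [he, hfc, if_pos rfl, mul_one]
      · intro ℓ hne
        rw [hfc, if_neg, mul_zero]
        intro hcontra
        apply hne
        have h1 : ℓ * 2 ^ j = (2 : ℤ) ^ (u - j) * 2 ^ j := by linarith [hcontra, hpow]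
        exact mul_right_cancel₀ h2j h1
    · rw [if_neg hju]
      have hz : ∀ ℓ : ℤ, fc1 (φt j) (0 + ℓ * 2 ^ j) * fc1 fu (0 + ℓ * 2 ^ j) = 0 := by
        intro ℓ
        rw [hfc, if_neg, mul_zero]
        intro hcontra
        have hu : (2 : ℤ) ^ u < 2 ^ j := by
          apply pow_lt_pow_right₀ one_lt_two (by omega)
        have hj0 : (0 : ℤ) < 2 ^ j := by positivity
        have hu0 : (0 : ℤ) < 2 ^ u := by positivity
        rcases le_or_gt ℓ 0 with hl | hl
        · nlinarith
        · nlinarith [mul_le_mul_of_nonneg_right (by omega : (1 : ℤ) ≤ ℓ) hj0.le]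
      rw [tsum_congr hz, tsum_zero]

end Smolyak
end
end

section
/- (Stability of the mixed Peetre maximal function under local-supremum-dominated convolutions.) Let d≥1, a>0, τ>0, c>0, 𝐣 ∈ ℤ₊^d, and let φ̃_𝐣 be an integrable function on 𝕋^d such that |(φ̃_𝐣*g)(𝐱)| ≤ c·sup{|g(𝐱+𝐲)| : |y_i| ≤ τ2^{-j_i}, i=1,…,d} for all g ∈ C(𝕋^d) and all 𝐱. Then for every f ∈ C(𝕋^d) and every 𝐱: 𝒫_{2^𝐣,a}(f*φ̃_𝐣)(𝐱) ≤ c(1+τ)^{da}·𝒫_{2^𝐣,a}f(𝐱). -/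
open MeasureTheory Complex Filter Set
open scoped BigOperators ENNReal NNReal Topology

noncomputable section

namespace Smolyak

lemma periodic_coord' {d : ℕ} {f : (Fin d → ℝ) → ℂ} (hper : PeriodicD f)
    (x : Fin d → ℝ) (i : Fin d) :
    Function.Periodic (fun t => f (Function.update x i t)) (2 * Real.pi) := by
  intro t
  have h := hper (Function.update x i t) i
  simpa [Function.update_idem, Function.update_self] using h

lemma toPer_mem' (x : ℝ) : toPer x ∈ Set.Icc (-Real.pi) Real.pi := by
  have hπ : 0 < Real.pi := Real.pi_pos
  set u := (x + Real.pi) / (2 * Real.pi) with hu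
  have h2u : 2 * Real.pi * u = x + Real.pi := by
    rw [hu]; field_simp
  have hfr0 : 0 ≤ Int.fract u := Int.fract_nonneg u
  have hfr1 : Int.fract u < 1 := Int.fract_lt_one u
  have hx : toPer x = 2 * Real.pi * Int.fract u - Real.pi := by
    rw [toPer, Int.fract]
    nlinarith [h2u]
  rw [hx]
  constructor <;> nlinarith

lemma exists_bound' {d : ℕ} {f : (Fin d → ℝ) → ℂ} (hf : Continuous f)
    (hper : PeriodicD f) : ∃ M, ∀ x, ‖f x‖ ≤ M := by
  classical
  have hcomp : IsCompact (cubeT d) := isCompact_univ_pi fun _ => isCompact_Icc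
  obtain ⟨M, hM⟩ := hcomp.exists_bound_of_continuousOn hf.continuousOn
  refine ⟨M, fun x => ?_⟩
  have key : ∀ s : Finset (Fin d),
      f (fun i => if i ∈ s then toPer (x i) else x i) = f x := by
    intro s
    refine Finset.induction_on s ?_ ?_
    · simp
    · intro jj t hjj ih
      have hupdate : (fun i => if i ∈ insert jj t then toPer (x i) else x i)
          = Function.update (fun i => if i ∈ t then toPer (x i) else x i) jj (toPer (x jj)) := by
        funext i
        by_cases hij : i = jj
        · subst hij; simp
        · simp [Function.update_of_ne hij, hij, Finset.mem_insert]
      rw [hupdate]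
      set z : Fin d → ℝ := fun i => if i ∈ t then toPer (x i) else x i with hz
      have hzj : z jj = x jj := by simp [hz, hjj]
      have hp := (periodic_coord' hper z jj).int_mul (-(⌊(x jj + Real.pi) / (2 * Real.pi)⌋)) (z jj)
      have htoPer : toPer (x jj)
          = z jj + ((-(⌊(x jj + Real.pi) / (2 * Real.pi)⌋) : ℤ) : ℝ) * (2 * Real.pi) := by
        rw [toPer, hzj]; push_cast; ring
      rw [htoPer]
      calc f (Function.update z jj (z jj + ((-(⌊(x jj + Real.pi) / (2 * Real.pi)⌋) : ℤ) : ℝ) * (2 * Real.pi)))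
          = f (Function.update z jj (z jj)) := hp
        _ = f z := by rw [Function.update_eq_self]
        _ = f x := ih
  have hmem : (fun i => toPer (x i)) ∈ cubeT d := by
    intro i _
    exact toPer_mem' (x i)
  have := key Finset.univ
  simp only [Finset.mem_univ, if_true] at this
  calc ‖f x‖ = ‖f (fun i => toPer (x i))‖ := by rw [this]
    _ ≤ M := hM _ hmem


/-- **Lemma (stability of the mixed Peetre maximal function under local-supremum-dominated
convolutions).** If `|(K*g)(𝐱)| ≤ c·sup{|g(𝐱+𝐲)| : |y_i| ≤ τ2^{-j_i}}` for continuous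
periodic `g`, then `𝒫_{2^𝐣,a}(K*f)(𝐱) ≤ c(1+τ)^{da} 𝒫_{2^𝐣,a}f(𝐱)` for all continuous
periodic `f` and all `𝐱`. -/
theorem peetre_stability
    (d : ℕ) (hd : 1 ≤ d)
    (a τ cc : ℝ) (ha : 0 < a) (hτ : 0 < τ) (hcc : 0 < cc)
    (j : Fin d → ℕ)
    (K : (Fin d → ℝ) → ℂ)
    (hKint : IntegrableOn K (cubeT d)) (hKper : PeriodicD K)
    (hdom : ∀ g : (Fin d → ℝ) → ℂ, Continuous g → PeriodicD g → ∀ x : Fin d → ℝ,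
      ‖convD d K g x‖ ≤
        cc * ⨆ y : {y : Fin d → ℝ // ∀ i, |y i| ≤ τ * 2 ^ (-(j i : ℤ))}, ‖g (x + y.1)‖) :
    ∀ f : (Fin d → ℝ) → ℂ, Continuous f → PeriodicD f → ∀ x : Fin d → ℝ,
      peetre (fun i => (2 : ℝ) ^ (j i)) a (fun z => convD d K f z) x ≤
        cc * (1 + τ) ^ ((d : ℝ) * a) * peetre (fun i => (2 : ℝ) ^ (j i)) a f x := by
  intro f hf hfper x
  obtain ⟨M, hM⟩ := exists_bound' hf hfper
  set b : Fin d → ℝ := fun i => (2 : ℝ) ^ (j i) with hb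
  set D : (Fin d → ℝ) → ℝ := fun y => ∏ i, (1 + b i * |y i|) ^ a with hD
  have hb0 : ∀ i, (0 : ℝ) ≤ b i := fun i => by positivity
  have hfac1 : ∀ (y : Fin d → ℝ) (i : Fin d), (1 : ℝ) ≤ (1 + b i * |y i|) ^ a := by
    intro y i
    refine Real.one_le_rpow ?_ ha.le
    nlinarith [hb0 i, abs_nonneg (y i), mul_nonneg (hb0 i) (abs_nonneg (y i))]
  have hD1 : ∀ y, (1 : ℝ) ≤ D y := by
    intro y
    show (1 : ℝ) ≤ ∏ i, (1 + b i * |y i|) ^ a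
    have h := Finset.prod_le_prod (s := Finset.univ) (f := fun _ : Fin d => (1:ℝ))
      (g := fun i => (1 + b i * |y i|) ^ a)
      (fun i _ => zero_le_one) (fun i _ => hfac1 y i)
    simpa using h
  have hDpos : ∀ y, (0 : ℝ) < D y := fun y => lt_of_lt_of_le one_pos (hD1 y)
  have hbdd : BddAbove (Set.range fun y : Fin d → ℝ => ‖f (x + y)‖ / D y) := by
    refine ⟨M, ?_⟩
    rintro _ ⟨y, rfl⟩
    exact le_trans (div_le_self (norm_nonneg _) (hD1 y)) (hM _)
  set P := peetre b a f x with hPd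
  have hPdef : P = ⨆ y : Fin d → ℝ, ‖f (x + y)‖ / D y := rfl
  have hPle : ∀ w : Fin d → ℝ, ‖f (x + w)‖ ≤ P * D w := by
    intro w
    have h1 : ‖f (x + w)‖ / D w ≤ P := hPdef ▸ le_ciSup hbdd w
    exact (div_le_iff₀ (hDpos w)).mp h1
  have hP0 : 0 ≤ P := by
    have h1 : ‖f (x + 0)‖ / D 0 ≤ P := hPdef ▸ le_ciSup hbdd 0
    have : (0:ℝ) ≤ ‖f (x + 0)‖ / D 0 := div_nonneg (norm_nonneg _) (hDpos 0).le
    linarith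
  have hτ1 : (0:ℝ) < 1 + τ := by linarith
  rw [show peetre b a (fun z => convD d K f z) x
      = ⨆ y : Fin d → ℝ, ‖convD d K f (x + y)‖ / D y from rfl]
  refine ciSup_le fun y => ?_
  rw [div_le_iff₀ (hDpos y)]
  haveI : Nonempty {z : Fin d → ℝ // ∀ i, |z i| ≤ τ * 2 ^ (-(j i : ℤ))} :=
    ⟨⟨0, fun i => by
      simpa using mul_nonneg hτ.le (le_of_lt (by positivity : (0:ℝ) < 2 ^ (-(j i : ℤ))))⟩⟩
  have hsup : (⨆ z : {z : Fin d → ℝ // ∀ i, |z i| ≤ τ * 2 ^ (-(j i : ℤ))}, ‖f (x + y + z.1)‖)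
      ≤ P * ((1 + τ) ^ ((d : ℝ) * a) * D y) := by
    refine ciSup_le fun z => ?_
    have hzle : ∀ i, |y i + z.1 i| ≤ |y i| + τ * 2 ^ (-(j i : ℤ)) :=
      fun i => (abs_add_le _ _).trans (by linarith [z.2 i])
    have hfacle : ∀ i, (1 + b i * |y i + z.1 i|) ^ a ≤ ((1 + τ) * (1 + b i * |y i|)) ^ a := by
      intro i
      refine Real.rpow_le_rpow (by positivity) ?_ ha.le
      have h2 : b i * (τ * 2 ^ (-(j i : ℤ))) = τ := by
        have h21 : (2 : ℝ) ^ (j i) * 2 ^ (-(j i : ℤ)) = 1 := by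
          rw [← zpow_natCast (2 : ℝ) (j i), ← zpow_add₀ (two_ne_zero)]
          simp
        calc b i * (τ * 2 ^ (-(j i : ℤ))) = τ * ((2 : ℝ) ^ (j i) * 2 ^ (-(j i : ℤ))) := by
              rw [hb]; ring
          _ = τ := by rw [h21]; ring
      have h3 : b i * |y i + z.1 i| ≤ b i * (|y i| + τ * 2 ^ (-(j i : ℤ))) :=
        mul_le_mul_of_nonneg_left (hzle i) (hb0 i)
      nlinarith [mul_nonneg hτ.le (mul_nonneg (hb0 i) (abs_nonneg (y i))), hb0 i,
        abs_nonneg (y i)]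
    have hDle : D (y + z.1) ≤ (1 + τ) ^ ((d : ℝ) * a) * D y := by
      calc D (y + z.1) = ∏ i, (1 + b i * |y i + z.1 i|) ^ a := rfl
        _ ≤ ∏ i, ((1 + τ) * (1 + b i * |y i|)) ^ a :=
            Finset.prod_le_prod (fun i _ => by positivity) (fun i _ => hfacle i)
        _ = ∏ i, ((1 + τ) ^ a * (1 + b i * |y i|) ^ a) :=
            Finset.prod_congr rfl fun i _ => Real.mul_rpow hτ1.le (by positivity)
        _ = ((1 + τ) ^ a) ^ (d : ℕ) * D y := by
            rw [Finset.prod_mul_distrib, Finset.prod_const, Finset.card_univ, Fintype.card_fin]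
        _ = (1 + τ) ^ ((d : ℝ) * a) * D y := by
            rw [← Real.rpow_natCast ((1 + τ) ^ a) d, ← Real.rpow_mul hτ1.le, mul_comm a]
    calc ‖f (x + y + z.1)‖ = ‖f (x + (y + z.1))‖ := by rw [add_assoc]
      _ ≤ P * D (y + z.1) := hPle _
      _ ≤ P * ((1 + τ) ^ ((d : ℝ) * a) * D y) := mul_le_mul_of_nonneg_left hDle hP0
  calc ‖convD d K f (x + y)‖
      ≤ cc * ⨆ z : {z : Fin d → ℝ // ∀ i, |z i| ≤ τ * 2 ^ (-(j i : ℤ))}, ‖f (x + y + z.1)‖ :=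
        hdom f hf hfper (x + y)
    _ ≤ cc * (P * ((1 + τ) ^ ((d : ℝ) * a) * D y)) := mul_le_mul_of_nonneg_left hsup hcc.le
    _ = cc * (1 + τ) ^ ((d : ℝ) * a) * P * D y := by ring

end Smolyak
end
end
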